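/- arXiv:1602.07090 — 4 statements merged into one kernel-verified Lean document; each statement's English description precedes it below -/
import Mathlib

section
/- Let X and Y be Banach spaces, and suppose there exists f ∈ S_{Y*} with n(Y*, f) = 1. If X is almost square, then X ⊗̂_π Y is locally almost square. -/
open Filter Topology

noncomputable section

/-- A Banach space is octahedral (OH). -/
def IsOctahedral (Z : Type*) [NormedAddCommGroup Z] : Prop :=
  ∀ (n : ℕ) (z : Fin n → Z), (∀ i, ‖z i‖ = 1) → ∀ ε : ℝ, 0 < ε →
    ∃ w : Z, ‖w‖ = 1 ∧ ∀ i, ‖z i + w‖ > 2 - ε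

/-- Locally octahedral (LOH). -/
def IsLocallyOctahedral (Z : Type*) [NormedAddCommGroup Z] : Prop :=
  ∀ z : Z, ‖z‖ = 1 → ∀ ε : ℝ, 0 < ε →
    ∃ w : Z, ‖w‖ = 1 ∧ ‖z + w‖ > 2 - ε ∧ ‖z - w‖ > 2 - ε

/-- Weakly octahedral (WOH). -/
def IsWeaklyOctahedral (X : Type*) [NormedAddCommGroup X] [NormedSpace ℝ X] : Prop :=
  ∀ (n : ℕ) (z : Fin n → X), (∀ i, ‖z i‖ = 1) → ∀ f : X →L[ℝ] ℝ, ‖f‖ ≤ 1 →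
    ∀ ε : ℝ, 0 < ε → ∃ y : X, ‖y‖ = 1 ∧ ∀ i, ∀ t : ℝ, 0 < t →
      ‖z i + t • y‖ ≥ (1 - ε) * (|f (z i)| + t) ∧
      ‖z i - t • y‖ ≥ (1 - ε) * (|f (z i)| + t)

/-- Almost square (ASQ), sequential formulation. -/
def IsASQ (Z : Type*) [NormedAddCommGroup Z] : Prop :=
  ∀ (n : ℕ) (z : Fin n → Z), (∀ i, ‖z i‖ = 1) →
    ∃ w : ℕ → Z, (∀ k, ‖w k‖ ≤ 1) ∧
      Tendsto (fun k => ‖w k‖) atTop (nhds 1) ∧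
      ∀ i, Tendsto (fun k => ‖z i + w k‖) atTop (nhds 1) ∧
           Tendsto (fun k => ‖z i - w k‖) atTop (nhds 1)

/-- Almost square (ASQ), finite-ε formulation. -/
def IsASQeps (Z : Type*) [NormedAddCommGroup Z] : Prop :=
  ∀ (n : ℕ) (z : Fin n → Z), (∀ i, ‖z i‖ = 1) → ∀ ε : ℝ, 0 < ε →
    ∃ w : Z, ‖w‖ = 1 ∧ ∀ i, ‖z i + w‖ ≤ 1 + ε ∧ ‖z i - w‖ ≤ 1 + ε

/-- Locally almost square (LASQ), sequential formulation. -/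
def IsLASQ (Z : Type*) [NormedAddCommGroup Z] : Prop :=
  ∀ z : Z, ‖z‖ = 1 →
    ∃ w : ℕ → Z, (∀ k, ‖w k‖ ≤ 1) ∧
      Tendsto (fun k => ‖w k‖) atTop (nhds 1) ∧
      Tendsto (fun k => ‖z + w k‖) atTop (nhds 1) ∧
      Tendsto (fun k => ‖z - w k‖) atTop (nhds 1)

/-- Locally almost square (LASQ), ε formulation. -/
def IsLASQeps (Z : Type*) [NormedAddCommGroup Z] : Prop :=
  ∀ z : Z, ‖z‖ = 1 → ∀ ε : ℝ, 0 < ε →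
    ∃ w : Z, ‖w‖ = 1 ∧ ‖z + w‖ ≤ 1 + ε ∧ ‖z - w‖ ≤ 1 + ε

/-- Weakly almost square (WASQ). -/
def IsWASQ (Z : Type*) [NormedAddCommGroup Z] [NormedSpace ℝ Z] : Prop :=
  ∀ z : Z, ‖z‖ = 1 →
    ∃ w : ℕ → Z, (∀ k, ‖w k‖ ≤ 1) ∧
      Tendsto (fun k => ‖w k‖) atTop (nhds 1) ∧
      Tendsto (fun k => ‖z + w k‖) atTop (nhds 1) ∧
      Tendsto (fun k => ‖z - w k‖) atTop (nhds 1) ∧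
      ∀ f : Z →L[ℝ] ℝ, Tendsto (fun k => f (w k)) atTop (nhds 0)

/-- Local diameter two property: every slice of the unit ball has diameter two. -/
def HasLD2P (Z : Type*) [NormedAddCommGroup Z] [NormedSpace ℝ Z] : Prop :=
  ∀ f : Z →L[ℝ] ℝ, ‖f‖ = 1 → ∀ α : ℝ, 0 < α →
    Metric.diam {x : Z | ‖x‖ ≤ 1 ∧ 1 - α < f x} = 2

/-- Diameter two property: every nonempty relatively weakly open subset of the unit
ball has diameter two. -/
def HasD2P (Z : Type*) [NormedAddCommGroup Z] [NormedSpace ℝ Z] : Prop :=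
  ∀ U : Set Z, U.Nonempty → (∀ x ∈ U, ‖x‖ ≤ 1) →
    (∀ x ∈ U, ∃ (n : ℕ) (f : Fin n → Z →L[ℝ] ℝ) (δ : ℝ), 0 < δ ∧
      {y : Z | ‖y‖ ≤ 1 ∧ ∀ i, |f i y - f i x| < δ} ⊆ U) →
    Metric.diam U = 2

/-- The Schur property. -/
def HasSchurProperty (Z : Type*) [SeminormedAddCommGroup Z] [NormedSpace ℝ Z] : Prop :=
  ∀ (u : ℕ → Z) (x : Z),
    (∀ f : Z →L[ℝ] ℝ, Tendsto (fun k => f (u k)) atTop (nhds (f x))) →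
    Tendsto (fun k => ‖u k - x‖) atTop (nhds 0)

/-- The Dunford–Pettis property: every weakly compact operator is
weak-to-norm sequentially continuous. -/
def HasDPP (X : Type*) [NormedAddCommGroup X] [NormedSpace ℝ X] : Prop :=
  ∀ (Y : Type) (_ : NormedAddCommGroup Y) (_ : NormedSpace ℝ Y) (_ : CompleteSpace Y)
    (T : X →L[ℝ] Y),
    (∃ K : Set (WeakSpace ℝ Y), IsCompact K ∧
      ∀ x : X, ‖x‖ ≤ 1 → toWeakSpace ℝ Y (T x) ∈ K) →
    ∀ (u : ℕ → X) (x : X),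
      (∀ f : X →L[ℝ] ℝ, Tendsto (fun k => f (u k)) atTop (nhds (f x))) →
      Tendsto (fun k => ‖T (u k) - T x‖) atTop (nhds 0)

/-- `Z`, together with the bilinear-type map `t`, is (a realization of) the injective
tensor product `X ⊗̂_ε Y`: the span of elementary tensors is dense and the norm of any
linear combination of elementary tensors is given by the injective tensor norm. -/
def IsInjTensorProduct (X Y Z : Type*) [NormedAddCommGroup X] [NormedSpace ℝ X]
    [NormedAddCommGroup Y] [NormedSpace ℝ Y] [NormedAddCommGroup Z] [NormedSpace ℝ Z]
    (t : X → Y → Z) : Prop :=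
  (Submodule.span ℝ (Set.range fun p : X × Y => t p.1 p.2)).topologicalClosure = ⊤ ∧
  ∀ l : List (X × Y),
    ‖(l.map fun p => t p.1 p.2).sum‖ =
      sSup {s : ℝ | ∃ (f : X →L[ℝ] ℝ) (g : Y →L[ℝ] ℝ), ‖f‖ ≤ 1 ∧ ‖g‖ ≤ 1 ∧
        s = |(l.map fun p => f p.1 * g p.2).sum|}

/-- `Z`, together with the map `t`, is (a realization of) the projective tensor product
`X ⊗̂_π Y`: the span of elementary tensors is dense and the norm of any combination of
elementary tensors is the infimum of `Σ ‖xᵢ‖‖yᵢ‖` over all representations (two formal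
combinations represent the same tensor iff they agree against all pairs of functionals). -/
def IsProjTensorProduct (X Y Z : Type*) [NormedAddCommGroup X] [NormedSpace ℝ X]
    [NormedAddCommGroup Y] [NormedSpace ℝ Y] [NormedAddCommGroup Z] [NormedSpace ℝ Z]
    (t : X → Y → Z) : Prop :=
  (Submodule.span ℝ (Set.range fun p : X × Y => t p.1 p.2)).topologicalClosure = ⊤ ∧
  ∀ l : List (X × Y),
    ‖(l.map fun p => t p.1 p.2).sum‖ =
      sInf {s : ℝ | ∃ l' : List (X × Y),
        (∀ (f : X →L[ℝ] ℝ) (g : Y →L[ℝ] ℝ),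
          (l'.map fun p => f p.1 * g p.2).sum = (l.map fun p => f p.1 * g p.2).sum) ∧
        s = (l'.map fun p => ‖p.1‖ * ‖p.2‖).sum}

/-- `Z`, together with the diagonal map `δ : x ↦ x^N`, is (a realization of) the `N`-fold
injective symmetric tensor product `⊗̂_{ε,s,N} X`. -/
def IsInjSymTensorProduct (X : Type*) [NormedAddCommGroup X] [NormedSpace ℝ X] (N : ℕ)
    (Z : Type*) [NormedAddCommGroup Z] [NormedSpace ℝ Z] (δ : X → Z) : Prop :=
  (Submodule.span ℝ (Set.range δ)).topologicalClosure = ⊤ ∧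
  ∀ l : List (ℝ × X),
    ‖(l.map fun p => p.1 • δ p.2).sum‖ =
      sSup {s : ℝ | ∃ f : X →L[ℝ] ℝ, ‖f‖ ≤ 1 ∧
        s = |(l.map fun p => p.1 * (f p.2) ^ N).sum|}

/-- `Z`, together with the diagonal map `δ : x ↦ x^N`, is (a realization of) the `N`-fold
projective symmetric tensor product `⊗̂_{π,s,N} X`. -/
def IsProjSymTensorProduct (X : Type*) [NormedAddCommGroup X] [NormedSpace ℝ X] (N : ℕ)
    (Z : Type*) [NormedAddCommGroup Z] [NormedSpace ℝ Z] (δ : X → Z) : Prop :=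
  (Submodule.span ℝ (Set.range δ)).topologicalClosure = ⊤ ∧
  ∀ l : List (ℝ × X),
    ‖(l.map fun p => p.1 • δ p.2).sum‖ =
      sInf {s : ℝ | ∃ l' : List (ℝ × X),
        (∀ f : X →L[ℝ] ℝ,
          (l'.map fun p => p.1 * (f p.2) ^ N).sum = (l.map fun p => p.1 * (f p.2) ^ N).sum) ∧
        s = (l'.map fun p => |p.1| * ‖p.2‖ ^ N).sum}

/-- An operator `T : X* → Y` is weak*-to-weakly continuous. -/
def WeakStarToWeakContinuous {X Y : Type*} [NormedAddCommGroup X] [NormedSpace ℝ X]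
    [NormedAddCommGroup Y] [NormedSpace ℝ Y] (T : (X →L[ℝ] ℝ) →L[ℝ] Y) : Prop :=
  ∀ g : Y →L[ℝ] ℝ, Continuous fun f : WeakDual ℝ X => g (T f)

/-- The elementary tensor `x ⊗ y` regarded as the operator `x* ↦ x*(x) • y` in `L(X*, Y)`. -/
def elemTensor {X Y : Type*} [NormedAddCommGroup X] [NormedSpace ℝ X]
    [NormedAddCommGroup Y] [NormedSpace ℝ Y] (x : X) (y : Y) : (X →L[ℝ] ℝ) →L[ℝ] Y :=
  (ContinuousLinearMap.apply ℝ ℝ x).smulRight y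

/-- `n(Z, u) = 1`, i.e. `D(Z,u) = {f ∈ B_{Z*} : f(u) = 1}` is a norming set for `Z`. -/
def NormOneUnitary (Z : Type*) [NormedAddCommGroup Z] [NormedSpace ℝ Z] (u : Z) : Prop :=
  ‖u‖ = 1 ∧ ∀ z : Z, ‖z‖ ≤ sSup {r : ℝ | ∃ g : Z →L[ℝ] ℝ, ‖g‖ ≤ 1 ∧ g u = 1 ∧ r = |g z|}

/-- Asplund space: every closed separable subspace has separable dual. -/
def IsAsplund (Y : Type*) [NormedAddCommGroup Y] [NormedSpace ℝ Y] : Prop :=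
  ∀ S : Submodule ℝ Y, IsClosed (S : Set Y) → TopologicalSpace.SeparableSpace S →
    TopologicalSpace.SeparableSpace ((↥S) →L[ℝ] ℝ)

/-- The (metric) approximation-type property: finite-rank operators approximate the
identity uniformly on compact sets. -/
def HasAP (E : Type*) [NormedAddCommGroup E] [NormedSpace ℝ E] : Prop :=
  ∀ K : Set E, IsCompact K → ∀ ε : ℝ, 0 < ε →
    ∃ T : E →L[ℝ] E, FiniteDimensional ℝ (LinearMap.range (T : E →ₗ[ℝ] E)) ∧
      ∀ x ∈ K, ‖T x - x‖ ≤ ε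

end

set_option linter.unusedSectionVars false
set_option linter.unusedVariables false
section MyAux

open Submodule

variable {X Y Z : Type*} [NormedAddCommGroup X] [NormedSpace ℝ X]
  [NormedAddCommGroup Y] [NormedSpace ℝ Y]
  [NormedAddCommGroup Z] [NormedSpace ℝ Z]

/-- pointwise comparison of list sums -/
private lemma myList.sum_le_sum {α : Type*} (l : List α) (g h : α → ℝ)
    (H : ∀ a ∈ l, g a ≤ h a) : (l.map g).sum ≤ (l.map h).sum := by
  induction l with
  | nil => simp
  | cons a l ih =>
    simp only [List.map_cons, List.sum_cons]
    exact add_le_add (H a (by simp)) (ih fun b hb => H b (by simp [hb]))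

private lemma myList.sum_nonneg {α : Type*} (l : List α) (g : α → ℝ)
    (H : ∀ a ∈ l, 0 ≤ g a) : 0 ≤ (l.map g).sum := by
  simpa using myList.sum_le_sum l (fun _ => 0) g H

private lemma myList.norm_sum_le {α : Type*} (l : List α) (g : α → Z) :
    ‖(l.map g).sum‖ ≤ (l.map fun a => ‖g a‖).sum := by
  induction l with
  | nil => simp
  | cons a l ih =>
    simp only [List.map_cons, List.sum_cons]
    exact (norm_add_le _ _).trans (by linarith)

private lemma myList.abs_sum_le {α : Type*} (l : List α) (g : α → ℝ) :
    |(l.map g).sum| ≤ (l.map fun a => |g a|).sum :=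
  myList.norm_sum_le l g

private lemma myList.smul_sum {α : Type*} (l : List α) (s : ℝ) (g : α → Z) :
    (l.map fun a => s • g a).sum = s • (l.map g).sum := by
  induction l with
  | nil => simp
  | cons a l ih => simp [ih, smul_add]

private lemma myList.mul_sum {α : Type*} (l : List α) (s : ℝ) (g : α → ℝ) :
    (l.map fun a => s * g a).sum = s * (l.map g).sum := by
  induction l with
  | nil => simp
  | cons a l ih => simp [ih, mul_add]

private lemma myList.sum_map_add {α : Type*} (l : List α) (g h : α → Z) :
    (l.map fun a => g a + h a).sum = (l.map g).sum + (l.map h).sum := by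
  induction l with
  | nil => simp
  | cons a l ih => simp only [List.map_cons, List.sum_cons, ih]; abel

variable {t : X → Y → Z}

private lemma pt_mass_nonneg (l : List (X × Y)) :
    0 ≤ (l.map fun p => ‖p.1‖ * ‖p.2‖).sum :=
  myList.sum_nonneg l _ fun a _ => mul_nonneg (norm_nonneg _) (norm_nonneg _)

private lemma pt_bddBelow (l : List (X × Y)) :
    BddBelow {s : ℝ | ∃ l' : List (X × Y),
        (∀ (f : X →L[ℝ] ℝ) (g : Y →L[ℝ] ℝ),
          (l'.map fun p => f p.1 * g p.2).sum = (l.map fun p => f p.1 * g p.2).sum) ∧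
        s = (l'.map fun p => ‖p.1‖ * ‖p.2‖).sum} := by
  refine ⟨0, fun s hs => ?_⟩
  obtain ⟨l', -, rfl⟩ := hs
  exact pt_mass_nonneg l'

private lemma pt_upper (ht : IsProjTensorProduct X Y Z t) (l : List (X × Y)) :
    ‖(l.map fun p => t p.1 p.2).sum‖ ≤ (l.map fun p => ‖p.1‖ * ‖p.2‖).sum := by
  rw [ht.2 l]
  exact csInf_le (pt_bddBelow l) ⟨l, fun _ _ => rfl, rfl⟩

private lemma pt_zero (ht : IsProjTensorProduct X Y Z t) (l : List (X × Y))
    (h : ∀ (f : X →L[ℝ] ℝ) (g : Y →L[ℝ] ℝ), (l.map fun p => f p.1 * g p.2).sum = 0) :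
    (l.map fun p => t p.1 p.2).sum = 0 := by
  have h1 : ‖(l.map fun p => t p.1 p.2).sum‖ ≤ 0 := by
    rw [ht.2 l]
    exact csInf_le (pt_bddBelow l) ⟨[], fun f g => by simpa using (h f g).symm, by simp⟩
  have h2 := norm_nonneg (l.map fun p => t p.1 p.2).sum
  rw [← norm_eq_zero]
  linarith

private lemma pt_single_le (ht : IsProjTensorProduct X Y Z t) (x : X) (y : Y) :
    ‖t x y‖ ≤ ‖x‖ * ‖y‖ := by
  simpa using pt_upper ht [(x, y)]

private lemma pt_zero_left (ht : IsProjTensorProduct X Y Z t) (y : Y) : t 0 y = 0 := by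
  simpa using pt_zero ht [(0, y)] (fun f g => by simp)

private lemma pt_zero_right (ht : IsProjTensorProduct X Y Z t) (x : X) : t x 0 = 0 := by
  simpa using pt_zero ht [(x, 0)] (fun f g => by simp)

private lemma pt_neg_left (ht : IsProjTensorProduct X Y Z t) (x : X) (y : Y) :
    t (-x) y = -(t x y) := by
  have h := pt_zero ht [(x, y), (-x, y)] (fun f g => by
    simp only [List.map_cons, List.map_nil, List.sum_cons, List.sum_nil, map_neg]
    ring)
  simp only [List.map_cons, List.map_nil, List.sum_cons, List.sum_nil, add_zero] at h
  exact (neg_eq_of_add_eq_zero_right (by simpa [add_comm] using h)).symm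

private lemma pt_add_left (ht : IsProjTensorProduct X Y Z t) (x x' : X) (y : Y) :
    t (x + x') y = t x y + t x' y := by
  have h := pt_zero ht [(x, y), (x', y), (-(x + x'), y)] (fun f g => by
    simp only [List.map_cons, List.map_nil, List.sum_cons, List.sum_nil, map_neg, map_add]
    ring)
  simp only [List.map_cons, List.map_nil, List.sum_cons, List.sum_nil, add_zero,
    pt_neg_left ht] at h
  have h2 : t x y + t x' y - t (x + x') y = 0 := by
    rw [sub_eq_add_neg]; rw [← add_assoc] at h; exact h
  exact (sub_eq_zero.mp h2).symm

private lemma pt_sub_left (ht : IsProjTensorProduct X Y Z t) (x x' : X) (y : Y) :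
    t (x - x') y = t x y - t x' y := by
  rw [sub_eq_add_neg, pt_add_left ht, pt_neg_left ht, ← sub_eq_add_neg]

private lemma pt_cont_left (ht : IsProjTensorProduct X Y Z t) (y : Y) :
    Continuous fun x : X => t x y := by
  apply (LipschitzWith.of_dist_le_mul (K := ‖y‖₊) (f := fun x : X => t x y)
    (fun a b => ?_)).continuous
  rw [dist_eq_norm, dist_eq_norm, ← pt_sub_left ht]
  calc ‖t (a - b) y‖ ≤ ‖a - b‖ * ‖y‖ := pt_single_le ht _ _
  _ = ‖y‖₊ * ‖a - b‖ := by rw [mul_comm]; norm_cast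

private noncomputable def ptL (ht : IsProjTensorProduct X Y Z t) (y : Y) : X →L[ℝ] Z :=
  AddMonoidHom.toRealLinearMap
    ⟨⟨fun x => t x y, pt_zero_left ht y⟩, fun a b => pt_add_left ht a b y⟩
    (pt_cont_left ht y)

private lemma ptL_apply (ht : IsProjTensorProduct X Y Z t) (y : Y) (x : X) :
    ptL ht y x = t x y := rfl

private lemma pt_smul_left (ht : IsProjTensorProduct X Y Z t) (c : ℝ) (x : X) (y : Y) :
    t (c • x) y = c • t x y := by
  have := map_smul (ptL ht y) c x
  rwa [ptL_apply, ptL_apply] at this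

private lemma pt_add_right (ht : IsProjTensorProduct X Y Z t) (x : X) (y y' : Y) :
    t x (y + y') = t x y + t x y' := by
  have h := pt_zero ht [(x, y), (x, y'), (-x, y + y')] (fun f g => by
    simp only [List.map_cons, List.map_nil, List.sum_cons, List.sum_nil, map_neg, map_add]
    ring)
  simp only [List.map_cons, List.map_nil, List.sum_cons, List.sum_nil, add_zero,
    pt_neg_left ht] at h
  have h2 : t x y + t x y' - t x (y + y') = 0 := by
    rw [sub_eq_add_neg]; rw [← add_assoc] at h; exact h
  exact (sub_eq_zero.mp h2).symm

private lemma pt_zero_right' (ht : IsProjTensorProduct X Y Z t) (x : X) : t x 0 = 0 :=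
  pt_zero_right ht x

private lemma pt_cont_right (ht : IsProjTensorProduct X Y Z t) (x : X) :
    Continuous fun y : Y => t x y := by
  apply (LipschitzWith.of_dist_le_mul (K := ‖x‖₊) (f := fun y : Y => t x y)
    (fun a b => ?_)).continuous
  have hsub : t x (a - b) = t x a - t x b := by
    have := pt_add_right ht x (a - b) b
    simp only [sub_add_cancel] at this
    rw [this]; abel
  rw [dist_eq_norm, dist_eq_norm, ← hsub]
  calc ‖t x (a - b)‖ ≤ ‖x‖ * ‖a - b‖ := pt_single_le ht _ _
  _ = ‖x‖₊ * ‖a - b‖ := by norm_cast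

private noncomputable def ptR (ht : IsProjTensorProduct X Y Z t) (x : X) : Y →L[ℝ] Z :=
  AddMonoidHom.toRealLinearMap
    ⟨⟨fun y => t x y, pt_zero_right ht x⟩, fun a b => pt_add_right ht x a b⟩
    (pt_cont_right ht x)

private lemma ptR_apply (ht : IsProjTensorProduct X Y Z t) (x : X) (y : Y) :
    ptR ht x y = t x y := rfl

private lemma pt_smul_right (ht : IsProjTensorProduct X Y Z t) (c : ℝ) (x : X) (y : Y) :
    t x (c • y) = c • t x y := by
  have := map_smul (ptR ht x) c y
  rwa [ptR_apply, ptR_apply] at this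

private lemma myList.sum_map_neg {α : Type*} (l : List α) (g : α → Z) :
    (l.map fun a => -(g a)).sum = -(l.map g).sum := by
  induction l with
  | nil => simp
  | cons a l ih => simp [ih]; abel

private lemma pt_lower (ht : IsProjTensorProduct X Y Z t) (l : List (X × Y))
    (fx : X →L[ℝ] ℝ) (gy : Y →L[ℝ] ℝ) (hfx : ‖fx‖ ≤ 1) (hgy : ‖gy‖ ≤ 1) :
    |(l.map fun p => fx p.1 * gy p.2).sum| ≤ ‖(l.map fun p => t p.1 p.2).sum‖ := by
  rw [ht.2 l]
  refine le_csInf ⟨_, ⟨l, fun _ _ => rfl, rfl⟩⟩ ?_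
  rintro s ⟨l', hagree, rfl⟩
  rw [← hagree fx gy]
  refine (myList.abs_sum_le l' _).trans (myList.sum_le_sum l' _ _ fun p _ => ?_)
  rw [abs_mul]
  have h1 : |fx p.1| ≤ ‖p.1‖ := by
    simpa using (fx.le_opNorm p.1).trans (by nlinarith [norm_nonneg p.1])
  have h2 : |gy p.2| ≤ ‖p.2‖ := by
    simpa using (gy.le_opNorm p.2).trans (by nlinarith [norm_nonneg p.2])
  exact mul_le_mul h1 h2 (abs_nonneg _) (norm_nonneg _)

private lemma pt_norm_single (ht : IsProjTensorProduct X Y Z t) (x : X) (y : Y) :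
    ‖t x y‖ = ‖x‖ * ‖y‖ := by
  refine le_antisymm (pt_single_le ht x y) ?_
  rcases eq_or_ne x 0 with rfl | hx
  · simp [pt_zero_left ht]
  rcases eq_or_ne y 0 with rfl | hy
  · simp [pt_zero_right ht]
  obtain ⟨fx, hfx1, hfxx⟩ := exists_dual_vector ℝ x (norm_ne_zero_iff.mpr hx)
  obtain ⟨gy, hgy1, hgyy⟩ := exists_dual_vector ℝ y (norm_ne_zero_iff.mpr hy)
  have := pt_lower ht [(x, y)] fx gy hfx1.le hgy1.le
  simp only [List.map_cons, List.map_nil, List.sum_cons, List.sum_nil, add_zero,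
    hfxx, hgyy] at this
  calc ‖x‖ * ‖y‖ = |‖x‖ * ‖y‖| := by
        rw [abs_of_nonneg (mul_nonneg (norm_nonneg _) (norm_nonneg _))]
  _ ≤ _ := by exact_mod_cast this

private lemma pt_sums_eq (ht : IsProjTensorProduct X Y Z t) (l l' : List (X × Y))
    (h : ∀ (f : X →L[ℝ] ℝ) (g : Y →L[ℝ] ℝ),
      (l'.map fun p => f p.1 * g p.2).sum = (l.map fun p => f p.1 * g p.2).sum) :
    (l'.map fun p => t p.1 p.2).sum = (l.map fun p => t p.1 p.2).sum := by
  have h0 := pt_zero ht (l' ++ l.map fun p => (-p.1, p.2)) (fun F G => by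
    rw [List.map_append, List.sum_append, h F G, List.map_map]
    have e1 : ((fun p : X × Y => F p.1 * G p.2) ∘ fun p : X × Y => (-p.1, p.2)) =
        fun p : X × Y => -(F p.1 * G p.2) := by
      funext p; simp [neg_mul]
    rw [e1, myList.sum_map_neg l (fun p : X × Y => F p.1 * G p.2)]
    ring)
  rw [List.map_append, List.sum_append, List.map_map] at h0
  have e2 : ((fun p : X × Y => t p.1 p.2) ∘ fun p : X × Y => (-p.1, p.2)) =
      fun p : X × Y => -(t p.1 p.2) := by
    funext p; exact pt_neg_left ht p.1 p.2
  rw [e2, myList.sum_map_neg l (fun p : X × Y => t p.1 p.2)] at h0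
  have h0' : (l'.map fun p => t p.1 p.2).sum - (l.map fun p => t p.1 p.2).sum = 0 := by
    rw [sub_eq_add_neg]; exact h0
  exact sub_eq_zero.mp h0'

private lemma pt_good_repr (ht : IsProjTensorProduct X Y Z t) (l : List (X × Y))
    {η : ℝ} (hη : 0 < η) :
    ∃ l' : List (X × Y), (l'.map fun p => t p.1 p.2).sum = (l.map fun p => t p.1 p.2).sum ∧
      (l'.map fun p => ‖p.1‖ * ‖p.2‖).sum < ‖(l.map fun p => t p.1 p.2).sum‖ + η := by
  have hlt : sInf {s : ℝ | ∃ l' : List (X × Y),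
      (∀ (f : X →L[ℝ] ℝ) (g : Y →L[ℝ] ℝ),
        (l'.map fun p => f p.1 * g p.2).sum = (l.map fun p => f p.1 * g p.2).sum) ∧
      s = (l'.map fun p => ‖p.1‖ * ‖p.2‖).sum} < ‖(l.map fun p => t p.1 p.2).sum‖ + η := by
    rw [← ht.2 l]; linarith
  obtain ⟨s, hs, hslt⟩ := exists_lt_of_csInf_lt
    (s := {s : ℝ | ∃ l' : List (X × Y),
      (∀ (f : X →L[ℝ] ℝ) (g : Y →L[ℝ] ℝ),
        (l'.map fun p => f p.1 * g p.2).sum = (l.map fun p => f p.1 * g p.2).sum) ∧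
      s = (l'.map fun p => ‖p.1‖ * ‖p.2‖).sum})
    ⟨_, ⟨l, fun _ _ => rfl, rfl⟩⟩ hlt
  obtain ⟨l', hagree, rfl⟩ := hs
  exact ⟨l', pt_sums_eq ht l l' hagree, hslt⟩

private lemma pt_dense (ht : IsProjTensorProduct X Y Z t) (z : Z) {η : ℝ} (hη : 0 < η) :
    ∃ l : List (X × Y), ‖z - (l.map fun p => t p.1 p.2).sum‖ < η := by
  have hz : z ∈ closure ((Submodule.span ℝ
      (Set.range fun p : X × Y => t p.1 p.2) : Submodule ℝ Z) : Set Z) := by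
    rw [← Submodule.topologicalClosure_coe, ht.1]
    simp
  obtain ⟨v, hv, hdist⟩ := Metric.mem_closure_iff.mp hz η hη
  obtain ⟨n, c, g, hsum⟩ := mem_span_set'.mp hv
  choose p hp using fun i => (g i).2
  refine ⟨List.ofFn fun i => (c i • (p i).1, (p i).2), ?_⟩
  have : ((List.ofFn fun i => (c i • (p i).1, (p i).2)).map fun q => t q.1 q.2).sum = v := by
    rw [List.map_ofFn, List.sum_ofFn, ← hsum]
    refine Finset.sum_congr rfl fun i _ => ?_
    simp only [Function.comp]
    rw [pt_smul_left ht]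
    congr 1
    exact hp i
  rw [this, ← dist_eq_norm]
  exact hdist

private lemma nou_exists_Phi (f : Y →L[ℝ] ℝ) (hf : NormOneUnitary (Y →L[ℝ] ℝ) f)
    (g : Y →L[ℝ] ℝ) {δ : ℝ} (hδ : 0 < δ) :
    ∃ Φ : (Y →L[ℝ] ℝ) →L[ℝ] ℝ, ‖Φ‖ ≤ 1 ∧ Φ f = 1 ∧ ‖g‖ - δ < |Φ g| := by
  have hne : {r : ℝ | ∃ Φ : (Y →L[ℝ] ℝ) →L[ℝ] ℝ, ‖Φ‖ ≤ 1 ∧ Φ f = 1 ∧ r = |Φ f|}.Nonempty := by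
    by_contra hc
    rw [Set.not_nonempty_iff_eq_empty] at hc
    have h1 := hf.2 f
    rw [hc, Real.sSup_empty] at h1
    rw [hf.1] at h1
    linarith
  obtain ⟨r0, Φ0, hΦ0a, hΦ0b, _⟩ := hne
  have hne2 : {r : ℝ | ∃ Φ : (Y →L[ℝ] ℝ) →L[ℝ] ℝ, ‖Φ‖ ≤ 1 ∧ Φ f = 1 ∧ r = |Φ g|}.Nonempty :=
    ⟨|Φ0 g|, Φ0, hΦ0a, hΦ0b, rfl⟩
  have h1 : ‖g‖ - δ <
      sSup {r : ℝ | ∃ Φ : (Y →L[ℝ] ℝ) →L[ℝ] ℝ, ‖Φ‖ ≤ 1 ∧ Φ f = 1 ∧ r = |Φ g|} :=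
    lt_of_lt_of_le (by linarith) (hf.2 g)
  obtain ⟨r, hr, hrlt⟩ := exists_lt_of_lt_csSup hne2 h1
  obtain ⟨Φ, hΦ1, hΦf, rfl⟩ := hr
  exact ⟨Φ, hΦ1, hΦf, hrlt⟩

private lemma face_point (f : Y →L[ℝ] ℝ) (hf : NormOneUnitary (Y →L[ℝ] ℝ) f)
    (g : Y →L[ℝ] ℝ) {δ : ℝ} (hδ0 : 0 < δ) (hδ1 : δ ≤ 1) :
    ∃ y : Y, ‖y‖ ≤ 1 ∧ 1 - δ ≤ f y ∧ ‖g‖ - δ ≤ |g y| := by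
  obtain ⟨Φ, hΦ1, hΦf, hΦg⟩ := nou_exists_Phi f hf g (δ := δ/2) (by linarith)
  set σ : ℝ := if 0 ≤ Φ g then 1 else -1 with hσdef
  have hσ : σ * Φ g = |Φ g| := by
    rcases le_or_gt 0 (Φ g) with h | h
    · rw [hσdef, if_pos h, one_mul, abs_of_nonneg h]
    · rw [hσdef, if_neg (not_le.mpr h), abs_of_neg h]; ring
  have hσabs : |σ| = 1 := by
    rcases le_or_gt 0 (Φ g) with h | h
    · rw [hσdef, if_pos h]; simp
    · rw [hσdef, if_neg (not_le.mpr h)]; simp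
  set h : Y →L[ℝ] ℝ := σ • g + f with hhdef
  have hΦh : Φ h = |Φ g| + 1 := by
    rw [hhdef, map_add, map_smul, smul_eq_mul, hσ, hΦf]
  have hhnorm : ‖g‖ + 1 - δ/2 < ‖h‖ := by
    have h2 : |Φ g| + 1 ≤ |Φ h| := by rw [hΦh]; exact le_abs_self _
    have h3 : |Φ h| ≤ ‖Φ‖ * ‖h‖ := by
      have := Φ.le_opNorm h
      simpa [Real.norm_eq_abs] using this
    have h4 : ‖Φ‖ * ‖h‖ ≤ 1 * ‖h‖ :=
      mul_le_mul_of_nonneg_right hΦ1 (norm_nonneg _)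
    nlinarith [norm_nonneg h]
  have key : ∃ y : Y, ‖y‖ ≤ 1 ∧ ‖g‖ + 1 - δ < h y := by
    by_contra hc
    push_neg at hc
    have hcbound : (0:ℝ) ≤ ‖g‖ + 1 - δ := by linarith [norm_nonneg g]
    have habs : ∀ y : Y, ‖y‖ ≤ 1 → |h y| ≤ ‖g‖ + 1 - δ := by
      intro y hy
      refine abs_le.mpr ⟨?_, hc y hy⟩
      have := hc (-y) (by simpa using hy)
      simp only [map_neg] at this
      linarith
    have hnorm : ‖h‖ ≤ ‖g‖ + 1 - δ := by
      refine h.opNorm_le_bound hcbound (fun y => ?_)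
      rcases eq_or_ne y 0 with rfl | hy0
      · simp
      · have hyn : (0:ℝ) < ‖y‖ := norm_pos_iff.mpr hy0
        have hu : ‖(‖y‖⁻¹ • y)‖ ≤ 1 := by
          rw [norm_smul, norm_inv, norm_norm]
          rw [inv_mul_cancel₀ (ne_of_gt hyn)]
        have := habs _ hu
        rw [map_smul, smul_eq_mul, abs_mul, abs_inv, abs_norm] at this
        calc ‖h y‖ = ‖y‖ * (‖y‖⁻¹ * |h y|) := by
              rw [Real.norm_eq_abs]; field_simp
        _ ≤ ‖y‖ * (‖g‖ + 1 - δ) := by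
              apply mul_le_mul_of_nonneg_left _ hyn.le
              exact this
        _ = (‖g‖ + 1 - δ) * ‖y‖ := by ring
    linarith
  obtain ⟨y, hy1, hy2⟩ := key
  have hfy : |f y| ≤ 1 := by
    have := f.le_opNorm y
    rw [hf.1, one_mul, Real.norm_eq_abs] at this
    linarith
  have hgy : |g y| ≤ ‖g‖ := by
    have := g.le_opNorm y
    rw [Real.norm_eq_abs] at this
    nlinarith [norm_nonneg g]
  have hhy : h y = σ * g y + f y := by
    rw [hhdef]; simp [smul_eq_mul]
  have hσgy : σ * g y ≤ |g y| := by
    calc σ * g y ≤ |σ * g y| := le_abs_self _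
    _ = |σ| * |g y| := abs_mul _ _
    _ = |g y| := by rw [hσabs, one_mul]
  refine ⟨y, hy1, ?_, ?_⟩
  · -- f y ≥ 1 - δ
    have : σ * g y ≤ ‖g‖ := le_trans hσgy hgy
    rw [hhy] at hy2
    linarith [abs_le.mp hfy]
  · -- |g y| ≥ ‖g‖ - δ
    rw [hhy] at hy2
    have : σ * g y > ‖g‖ - δ := by linarith [abs_le.mp hfy |>.2]
    linarith [hσgy]

private lemma decomp (f : Y →L[ℝ] ℝ) (hf : NormOneUnitary (Y →L[ℝ] ℝ) f)
    {δ : ℝ} (hδ0 : 0 < δ) (hδ1 : δ ≤ 1) (b : Y) (hb : ‖b‖ ≤ 1) :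
    ∃ L : List (ℝ × Y),
      (∀ r ∈ L, 0 ≤ r.1 ∧ ‖r.2‖ ≤ 1 ∧ 1 - δ ≤ |f r.2|) ∧
      (L.map fun r => r.1).sum ≤ 1 ∧
      ‖(1 - δ) • b - (L.map fun r => r.1 • r.2).sum‖ < δ := by
  set K : Set Y := {v : Y | ∃ L : List (ℝ × Y),
    (∀ r ∈ L, 0 ≤ r.1 ∧ ‖r.2‖ ≤ 1 ∧ 1 - δ ≤ |f r.2|) ∧
    (L.map fun r => r.1).sum ≤ 1 ∧ v = (L.map fun r => r.1 • r.2).sum} with hKdef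
  have hKconv : Convex ℝ K := by
    rintro v1 ⟨L1, hL1p, hL1s, rfl⟩ v2 ⟨L2, hL2p, hL2s, rfl⟩ a c ha hc hac
    refine ⟨(L1.map fun r => (a * r.1, r.2)) ++ (L2.map fun r => (c * r.1, r.2)), ?_, ?_, ?_⟩
    · intro r hr
      rcases List.mem_append.mp hr with hr | hr <;>
        obtain ⟨q, hq, rfl⟩ := List.mem_map.mp hr
      · obtain ⟨h1, h2, h3⟩ := hL1p q hq
        exact ⟨mul_nonneg ha h1, h2, h3⟩
      · obtain ⟨h1, h2, h3⟩ := hL2p q hq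
        exact ⟨mul_nonneg hc h1, h2, h3⟩
    · rw [List.map_append, List.sum_append, List.map_map, List.map_map]
      have e1 : ((fun r : ℝ × Y => r.1) ∘ fun r : ℝ × Y => (a * r.1, r.2)) =
          fun r : ℝ × Y => a * r.1 := rfl
      have e2 : ((fun r : ℝ × Y => r.1) ∘ fun r : ℝ × Y => (c * r.1, r.2)) =
          fun r : ℝ × Y => c * r.1 := rfl
      rw [e1, e2, myList.mul_sum L1 a (fun r => r.1), myList.mul_sum L2 c (fun r => r.1)]
      nlinarith [myList.sum_nonneg L1 (fun r : ℝ × Y => r.1) (fun r hr => (hL1p r hr).1),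
        myList.sum_nonneg L2 (fun r : ℝ × Y => r.1) (fun r hr => (hL2p r hr).1)]
    · rw [List.map_append, List.sum_append, List.map_map, List.map_map]
      have e1 : ((fun r : ℝ × Y => r.1 • r.2) ∘ fun r : ℝ × Y => (a * r.1, r.2)) =
          fun r : ℝ × Y => a • (r.1 • r.2) := by
        funext r; simp [mul_smul]
      have e2 : ((fun r : ℝ × Y => r.1 • r.2) ∘ fun r : ℝ × Y => (c * r.1, r.2)) =
          fun r : ℝ × Y => c • (r.1 • r.2) := by
        funext r; simp [mul_smul]
      rw [e1, e2, myList.smul_sum L1 a (fun r : ℝ × Y => r.1 • r.2),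
        myList.smul_sum L2 c (fun r : ℝ × Y => r.1 • r.2)]
  have hmemK : ∀ y : Y, ‖y‖ ≤ 1 → 1 - δ ≤ f y → y ∈ K ∧ -y ∈ K := by
    intro y hy1 hy2
    have habs : 1 - δ ≤ |f y| := le_trans hy2 (le_abs_self _)
    constructor
    · exact ⟨[(1, y)], by
        intro r hr
        simp only [List.mem_singleton] at hr
        subst hr
        exact ⟨zero_le_one, hy1, habs⟩, by simp, by simp⟩
    · refine ⟨[(1, -y)], ?_, by simp, by simp⟩
      intro r hr
      simp only [List.mem_singleton] at hr
      subst hr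
      refine ⟨zero_le_one, by simpa using hy1, by simpa using habs⟩
  have hclos : (1 - δ) • b ∈ closure K := by
    by_contra hmem
    obtain ⟨G, u, hGu, huG⟩ :=
      geometric_hahn_banach_closed_point (hKconv.closure) isClosed_closure hmem
    have hGsub : ∀ v ∈ K, G v < u := fun v hv => hGu v (subset_closure hv)
    have hGb : G ((1 - δ) • b) ≤ (1 - δ) * ‖G‖ := by
      rw [map_smul, smul_eq_mul]
      have h1 : G b ≤ |G b| := le_abs_self _
      have h2 : |G b| ≤ ‖G‖ * ‖b‖ := by
        have := G.le_opNorm b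
        rwa [Real.norm_eq_abs] at this
      have h3 : ‖G‖ * ‖b‖ ≤ ‖G‖ * 1 := mul_le_mul_of_nonneg_left hb (norm_nonneg G)
      have h4 : G b ≤ ‖G‖ := by linarith
      have h5 : (0:ℝ) ≤ 1 - δ := by linarith
      nlinarith
    rcases eq_or_lt_of_le (norm_nonneg G) with hG0 | hGpos
    · -- ‖G‖ = 0
      obtain ⟨y, hy1, hy2, _⟩ := face_point f hf G hδ0 hδ1
      obtain ⟨hyK, _⟩ := hmemK y hy1 hy2
      have h1 : G y < u := hGsub y hyK
      have h2 : |G y| ≤ ‖G‖ * ‖y‖ := by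
        have := G.le_opNorm y
        rwa [Real.norm_eq_abs] at this
      have h3 : G y = 0 := by
        rw [← hG0, zero_mul] at h2
        exact abs_eq_zero.mp (le_antisymm h2 (abs_nonneg _))
      rw [h3] at h1
      rw [← hG0] at hGb
      simp only [mul_zero, zero_mul] at hGb
      linarith
    · -- ‖G‖ > 0
      have hηpos : 0 < min δ (δ * ‖G‖ / 2) := by positivity
      have hηδ : min δ (δ * ‖G‖ / 2) ≤ δ := min_le_left _ _
      obtain ⟨y, hy1, hy2, hy3⟩ := face_point f hf G hηpos (le_trans hηδ hδ1)
      have hy2' : 1 - δ ≤ f y := by linarith [hy2, hηδ]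
      obtain ⟨hyK, hyK'⟩ := hmemK y hy1 hy2'
      have h1 : G y < u := hGsub y hyK
      have h2 : G (-y) < u := hGsub (-y) hyK'
      rw [map_neg] at h2
      have h3 : |G y| < u := abs_lt.mpr ⟨by linarith, h1⟩
      have h4 : ‖G‖ - δ * ‖G‖ / 2 ≤ |G y| := by
        have := min_le_right δ (δ * ‖G‖ / 2)
        linarith [hy3]
      nlinarith
  obtain ⟨v, hvK, hdist⟩ := Metric.mem_closure_iff.mp hclos δ hδ0
  obtain ⟨L, hLp, hLs, rfl⟩ := hvK
  refine ⟨L, hLp, hLs, ?_⟩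
  rw [← dist_eq_norm]
  exact hdist

private lemma sq_one_smul {σ : ℝ} (hσ : σ = 1 ∨ σ = -1) (z : Z) : σ • σ • z = z := by
  rcases hσ with rfl | rfl <;> simp

private lemma perterm (ht : IsProjTensorProduct X Y Z t)
    (f : Y →L[ℝ] ℝ) (hf : NormOneUnitary (Y →L[ℝ] ℝ) f)
    {δ : ℝ} (hδ0 : 0 < δ) (hδ1 : δ ≤ 1/2) (x : X) (y : Y) :
    ∃ L : List (ℝ × X × Y),
      (∀ r ∈ L, 0 ≤ r.1 ∧ ‖r.2.1‖ = 1 ∧ ‖r.2.2‖ ≤ 1 ∧ 1 - δ ≤ f r.2.2) ∧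
      (L.map fun r => r.1).sum ≤ ‖x‖ * ‖y‖ * (1 - δ)⁻¹ ∧
      ‖t x y - (L.map fun r => r.1 • t r.2.1 r.2.2).sum‖ ≤ ‖x‖ * ‖y‖ * (δ * (1 - δ)⁻¹) := by
  have hδ' : (0:ℝ) < 1 - δ := by linarith
  rcases eq_or_ne x 0 with rfl | hx
  · exact ⟨[], by simp, by simp, by simp [pt_zero_left ht]⟩
  rcases eq_or_ne y 0 with rfl | hy
  · exact ⟨[], by simp, by simp, by simp [pt_zero_right ht]⟩
  have hxn : (0:ℝ) < ‖x‖ := norm_pos_iff.mpr hx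
  have hyn : (0:ℝ) < ‖y‖ := norm_pos_iff.mpr hy
  set a : X := ‖x‖⁻¹ • x with hadef
  set b : Y := ‖y‖⁻¹ • y with hbdef
  have ha : ‖a‖ = 1 := norm_smul_inv_norm hx
  have hb : ‖b‖ = 1 := norm_smul_inv_norm hy
  obtain ⟨Lb, hLbp, hLbs, hLbe⟩ := decomp f hf hδ0 (by linarith) b hb.le
  set C : ℝ := ‖x‖ * ‖y‖ * (1 - δ)⁻¹ with hCdef
  have hC0 : 0 ≤ C := by positivity
  set σ : (ℝ × Y) → ℝ := fun r => if 0 ≤ f r.2 then 1 else -1 with hσdef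
  have hσpm : ∀ r : ℝ × Y, σ r = 1 ∨ σ r = -1 := by
    intro r
    by_cases h : 0 ≤ f r.2
    · left; simp [hσdef, h]
    · right; simp [hσdef, h]
  have hσabs : ∀ r : ℝ × Y, |σ r| = 1 := by
    intro r
    rcases hσpm r with h | h <;> rw [h] <;> simp
  refine ⟨Lb.map fun r => (C * r.1, σ r • a, σ r • r.2), ?_, ?_, ?_⟩
  · intro r hr
    obtain ⟨q, hq, rfl⟩ := List.mem_map.mp hr
    obtain ⟨h1, h2, h3⟩ := hLbp q hq
    refine ⟨mul_nonneg hC0 h1, ?_, ?_, ?_⟩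
    · simp only [norm_smul, hσabs q, ha, Real.norm_eq_abs, one_mul]
    · simp only [norm_smul, hσabs q, Real.norm_eq_abs, one_mul]; exact h2
    · rw [map_smul, smul_eq_mul]
      rcases le_or_gt 0 (f q.2) with h | h
      · have : σ q = 1 := by rw [hσdef]; simp [h]
        rw [this, one_mul]
        rwa [abs_of_nonneg h] at h3
      · have : σ q = -1 := by simp [hσdef, not_le.mpr h]
        rw [this]
        rw [abs_of_neg h] at h3
        linarith
  · rw [List.map_map]
    have e1 : ((fun r : ℝ × X × Y => r.1) ∘ fun r : ℝ × Y => (C * r.1, σ r • a, σ r • r.2)) =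
        fun r : ℝ × Y => C * r.1 := rfl
    rw [e1, myList.mul_sum Lb C (fun r => r.1)]
    calc C * (Lb.map fun r => r.1).sum ≤ C * 1 := mul_le_mul_of_nonneg_left hLbs hC0
    _ = C := mul_one C
  · rw [List.map_map]
    have e1 : ((fun r : ℝ × X × Y => r.1 • t r.2.1 r.2.2) ∘
        fun r : ℝ × Y => (C * r.1, σ r • a, σ r • r.2)) =
        fun r : ℝ × Y => C • ((ptR ht a) (r.1 • r.2)) := by
      funext r
      simp only [Function.comp]
      rw [map_smul, ptR_apply]
      have : t (σ r • a) (σ r • r.2) = t a r.2 := by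
        rw [pt_smul_left ht, pt_smul_right ht, sq_one_smul (hσpm r)]
      rw [this, mul_smul]
    rw [e1, myList.smul_sum Lb C (fun r => (ptR ht a) (r.1 • r.2))]
    have e2 : (Lb.map fun r : ℝ × Y => (ptR ht a) (r.1 • r.2)).sum =
        (ptR ht a) ((Lb.map fun r : ℝ × Y => r.1 • r.2).sum) := by
      rw [map_list_sum, List.map_map]
      rfl
    rw [e2]
    have e3 : t x y = C • ((ptR ht a) ((1 - δ) • b)) := by
      rw [ptR_apply, pt_smul_right ht]
      have ex : x = ‖x‖ • a := by rw [hadef, smul_inv_smul₀ (ne_of_gt hxn)]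
      have ey : y = ‖y‖ • b := by rw [hbdef, smul_inv_smul₀ (ne_of_gt hyn)]
      conv_lhs => rw [ex, ey]
      rw [pt_smul_left ht, pt_smul_right ht, hCdef]
      rw [smul_smul, smul_smul]
      congr 1
      field_simp
    rw [e3, ← smul_sub, ← map_sub]
    rw [norm_smul, Real.norm_eq_abs, abs_of_nonneg hC0, ptR_apply]
    have e4 : ‖t a ((1 - δ) • b - (Lb.map fun r : ℝ × Y => r.1 • r.2).sum)‖ ≤ δ := by
      refine (pt_single_le ht _ _).trans ?_
      rw [ha, one_mul]
      exact hLbe.le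
    calc C * ‖t a ((1 - δ) • b - (Lb.map fun r : ℝ × Y => r.1 • r.2).sum)‖ ≤ C * δ :=
          mul_le_mul_of_nonneg_left e4 hC0
    _ = ‖x‖ * ‖y‖ * (δ * (1 - δ)⁻¹) := by rw [hCdef]; ring

private lemma myList.sum_map_sub {α : Type*} (l : List α) (g h : α → Z) :
    (l.map fun a => g a - h a).sum = (l.map g).sum - (l.map h).sum := by
  induction l with
  | nil => simp
  | cons a l ih => simp only [List.map_cons, List.sum_cons, ih]; abel

private lemma aggregate (ht : IsProjTensorProduct X Y Z t)
    (f : Y →L[ℝ] ℝ) (hf : NormOneUnitary (Y →L[ℝ] ℝ) f)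
    {δ : ℝ} (hδ0 : 0 < δ) (hδ1 : δ ≤ 1/2) (l : List (X × Y)) :
    ∃ L : List (ℝ × X × Y),
      (∀ r ∈ L, 0 ≤ r.1 ∧ ‖r.2.1‖ = 1 ∧ ‖r.2.2‖ ≤ 1 ∧ 1 - δ ≤ f r.2.2) ∧
      (L.map fun r => r.1).sum ≤ (l.map fun p => ‖p.1‖ * ‖p.2‖).sum * (1 - δ)⁻¹ ∧
      ‖(l.map fun p => t p.1 p.2).sum - (L.map fun r => r.1 • t r.2.1 r.2.2).sum‖ ≤
        (l.map fun p => ‖p.1‖ * ‖p.2‖).sum * (δ * (1 - δ)⁻¹) := by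
  induction l with
  | nil => exact ⟨[], by simp, by simp, by simp⟩
  | cons p l ih =>
    obtain ⟨Ll, hLlp, hLls, hLle⟩ := ih
    obtain ⟨Lp, hLpp, hLps, hLpe⟩ := perterm ht f hf hδ0 hδ1 p.1 p.2
    refine ⟨Lp ++ Ll, ?_, ?_, ?_⟩
    · intro r hr
      rcases List.mem_append.mp hr with hr | hr
      · exact hLpp r hr
      · exact hLlp r hr
    · rw [List.map_append, List.sum_append, List.map_cons, List.sum_cons, add_mul]
      exact add_le_add hLps hLls
    · rw [List.map_append, List.sum_append, List.map_cons, List.sum_cons,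
        List.map_cons, List.sum_cons, add_mul]
      have e : t p.1 p.2 + (l.map fun p => t p.1 p.2).sum -
          ((Lp.map fun r => r.1 • t r.2.1 r.2.2).sum +
           (Ll.map fun r => r.1 • t r.2.1 r.2.2).sum) =
          (t p.1 p.2 - (Lp.map fun r => r.1 • t r.2.1 r.2.2).sum) +
          ((l.map fun p => t p.1 p.2).sum - (Ll.map fun r => r.1 • t r.2.1 r.2.2).sum) := by
        abel
      rw [e]
      exact (norm_add_le _ _).trans (add_le_add hLpe hLle)

end MyAux

set_option maxHeartbeats 2000000 in
theorem statement9 (X Y Z : Type*) [NormedAddCommGroup X] [NormedSpace ℝ X] [CompleteSpace X]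
    [NormedAddCommGroup Y] [NormedSpace ℝ Y] [CompleteSpace Y]
    [NormedAddCommGroup Z] [NormedSpace ℝ Z] [CompleteSpace Z]
    (f : Y →L[ℝ] ℝ) (hf : NormOneUnitary (Y →L[ℝ] ℝ) f)
    (hX : IsASQeps X)
    (t : X → Y → Z) (ht : IsProjTensorProduct X Y Z t) :
    IsLASQeps Z := by
  intro z hz ε hε
  have hε100 : (0:ℝ) < ε/100 := by linarith
  set δ : ℝ := min (ε/100) (1/5) with hδdef
  have hδ0 : 0 < δ := lt_min hε100 (by norm_num)
  have hδε : δ ≤ ε/100 := min_le_left _ _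
  have hδ5 : δ ≤ 1/5 := min_le_right _ _
  have hδhalf : δ ≤ 1/2 := by linarith
  have hδ' : (0:ℝ) < 1 - δ := by linarith
  have hκ0 : (0:ℝ) ≤ (1-δ)⁻¹ := inv_nonneg.mpr hδ'.le
  have hd2 : δ*δ ≤ δ*(1/5) := mul_le_mul_of_nonneg_left hδ5 hδ0.le
  have hd3 : δ*(δ*δ) ≤ δ*(δ*(1/5)) := mul_le_mul_of_nonneg_left hd2 hδ0.le
  have hκ : (1-δ)⁻¹ ≤ 1 + 2*δ := by
    rw [← one_div, div_le_iff₀ hδ']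
    nlinarith
  obtain ⟨l₀, hl₀⟩ := pt_dense ht z hδ0
  set S₀ := (l₀.map fun p => t p.1 p.2).sum with hS₀def
  have hS₀ : ‖S₀‖ ≤ 1 + δ := by
    have h1 : ‖S₀‖ - ‖z‖ ≤ ‖S₀ - z‖ := norm_sub_norm_le _ _
    rw [norm_sub_rev, hz] at h1
    linarith [hl₀.le]
  obtain ⟨l₁, hl₁eq, hl₁m⟩ := pt_good_repr ht l₀ hδ0
  set M := (l₁.map fun p => ‖p.1‖ * ‖p.2‖).sum with hMdef
  have hM0 : (0:ℝ) ≤ M := pt_mass_nonneg l₁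
  have hM : M ≤ 1 + 2*δ := by
    have := hl₁m
    rw [← hS₀def] at this
    linarith
  obtain ⟨L, hLp, hLs, hLe⟩ := aggregate ht f hf hδ0 hδhalf l₁
  set T := (L.map fun r => r.1 • t r.2.1 r.2.2).sum with hTdef
  set N := (L.map fun r => r.1).sum with hNdef
  have hN0 : (0:ℝ) ≤ N := myList.sum_nonneg _ _ fun r hr => (hLp r hr).1
  have hzT : ‖z - T‖ ≤ 3*δ := by
    have h1 : z - T = (z - S₀) + (S₀ - T) := by abel
    have h2 : ‖S₀ - T‖ ≤ M * (δ * (1-δ)⁻¹) := by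
      rw [hS₀def, ← hl₁eq]
      exact hLe
    have hstep : δ * (1-δ)⁻¹ ≤ δ * (1+2*δ) := mul_le_mul_of_nonneg_left hκ hδ0.le
    have h3' : M * (δ * (1-δ)⁻¹) ≤ (1+2*δ) * (δ*(1+2*δ)) :=
      mul_le_mul hM hstep (by positivity) (by linarith)
    have h3 : M * (δ * (1-δ)⁻¹) ≤ 2*δ := by nlinarith [h3', hd2, hd3, hδ0.le, hδ5]
    calc ‖z - T‖ ≤ ‖z - S₀‖ + ‖S₀ - T‖ := by rw [h1]; exact norm_add_le _ _
    _ ≤ 3*δ := by linarith [hl₀.le]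
  have hNle : N ≤ 1 + 5*δ := by
    have h1 : N ≤ M * (1-δ)⁻¹ := hLs
    have h2 : M * (1-δ)⁻¹ ≤ (1+2*δ)*(1+2*δ) := mul_le_mul hM hκ hκ0 (by linarith)
    nlinarith [hd2, hδ0.le]
  have hTleN : ‖T‖ ≤ N := by
    refine (myList.norm_sum_le L _).trans ?_
    refine myList.sum_le_sum L _ _ (fun r hr => ?_)
    obtain ⟨h1, h2, h3, _⟩ := hLp r hr
    rw [norm_smul, Real.norm_eq_abs, abs_of_nonneg h1]
    have h5 : ‖t r.2.1 r.2.2‖ ≤ 1 :=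
      (pt_single_le ht _ _).trans (by rw [h2, one_mul]; exact h3)
    nlinarith
  have hNge : 1 - 3*δ ≤ N := by
    have h1 : ‖z‖ - ‖T‖ ≤ ‖z - T‖ := norm_sub_norm_le _ _
    rw [hz] at h1
    linarith
  have hNpos : (0:ℝ) < N := by linarith
  have hfam : ∀ i : Fin L.length, ‖(L.get i).2.1‖ = 1 :=
    fun i => (hLp _ (List.get_mem L i)).2.1
  obtain ⟨x₀, hx₀n, hx₀i⟩ := hX L.length (fun i => (L.get i).2.1) hfam δ hδ0
  have hx₀m : ∀ r ∈ L, ‖r.2.1 + x₀‖ ≤ 1 + δ ∧ ‖r.2.1 - x₀‖ ≤ 1 + δ := by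
    intro r hr
    obtain ⟨i, hi⟩ := List.mem_iff_get.mp hr
    rw [← hi]
    exact hx₀i i
  set u := (L.map fun r => r.1 • r.2.2).sum with hudef
  have hfu : (1-δ) * N ≤ f u := by
    have h1 : f u = (L.map fun r => f (r.1 • r.2.2)).sum := by
      rw [hudef, map_list_sum f, List.map_map]
      rfl
    have h2 : (1-δ) * N = (L.map fun r => (1-δ) * r.1).sum :=
      (myList.mul_sum L (1-δ) _).symm
    rw [h1, h2]
    refine myList.sum_le_sum L _ _ fun r hr => ?_
    obtain ⟨hr1, _, _, hr4⟩ := hLp r hr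
    rw [map_smul, smul_eq_mul]
    nlinarith
  have hule : ‖u‖ ≤ N := by
    refine (myList.norm_sum_le L _).trans ?_
    refine myList.sum_le_sum L _ _ (fun r hr => ?_)
    obtain ⟨h1, _, h3, _⟩ := hLp r hr
    rw [norm_smul, Real.norm_eq_abs, abs_of_nonneg h1]
    nlinarith
  have huge : (1-δ)*N ≤ ‖u‖ := by
    have h1 : f u ≤ |f u| := le_abs_self _
    have h2 : |f u| ≤ ‖f‖ * ‖u‖ := by
      have := f.le_opNorm u
      rwa [Real.norm_eq_abs] at this
    rw [hf.1, one_mul] at h2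
    linarith
  have hupos : (0:ℝ) < ‖u‖ :=
    lt_of_lt_of_le (by nlinarith : (0:ℝ) < (1-δ)*N) huge
  set c := ‖u‖⁻¹ with hcdef
  have hcpos : 0 < c := inv_pos.mpr hupos
  have huup : ‖u‖ ≤ 1 + 5*δ := le_trans hule hNle
  have hudown : (1-δ)*(1-3*δ) ≤ ‖u‖ :=
    le_trans (mul_le_mul_of_nonneg_left hNge hδ'.le) huge
  have hc1 : c ≤ 1 + 22*δ := by
    have h1 : (1:ℝ) ≤ (1+22*δ) * ‖u‖ := by
      have ha := mul_le_mul_of_nonneg_left hudown (show (0:ℝ) ≤ 1+22*δ by linarith)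
      nlinarith [ha, hd2, hd3, hδ0.le]
    rw [hcdef, ← one_div, div_le_iff₀ hupos]
    linarith
  have hc2 : 1 - 22*δ ≤ c := by
    have h1 : (1-22*δ) * ‖u‖ ≤ 1 := by
      rcases le_or_gt (1-22*δ) 0 with h | h
      · exact le_trans (mul_nonpos_of_nonpos_of_nonneg h hupos.le) zero_le_one
      · have ha := mul_le_mul_of_nonneg_left huup h.le
        nlinarith [ha, hd2, hδ0.le]
    rw [hcdef, ← one_div, le_div_iff₀ hupos]
    linarith
  have hcabs : |c - 1| ≤ 22*δ := abs_le.mpr ⟨by linarith, by linarith⟩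
  set w := t x₀ (c • u) with hwdef
  have hwn : ‖w‖ = 1 := by
    rw [hwdef, pt_norm_single ht, hx₀n, one_mul, norm_smul, Real.norm_eq_abs,
      abs_of_pos hcpos, hcdef, inv_mul_cancel₀ (ne_of_gt hupos)]
  have hw2 : w = c • (L.map fun r => r.1 • t x₀ r.2.2).sum := by
    have e0 : t x₀ u = (ptR ht x₀) u := (ptR_apply ht x₀ u).symm
    rw [hwdef, pt_smul_right ht, e0, hudef, map_list_sum, List.map_map]
    have e1 : ((⇑(ptR ht x₀)) ∘ fun r : ℝ × X × Y => r.1 • r.2.2) =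
        fun r : ℝ × X × Y => r.1 • t x₀ r.2.2 := by
      funext r
      simp only [Function.comp]
      rw [map_smul, ptR_apply]
    rw [e1]
  have hxbound : ∀ r ∈ L, ‖t (r.2.1 + c • x₀) r.2.2‖ ≤ 1 + 23*δ ∧
      ‖t (r.2.1 - c • x₀) r.2.2‖ ≤ 1 + 23*δ := by
    intro r hr
    obtain ⟨_, h2, h3, _⟩ := hLp r hr
    obtain ⟨hp, hm⟩ := hx₀m r hr
    have hcx : ‖(c - 1) • x₀‖ ≤ 22*δ := by
      rw [norm_smul, Real.norm_eq_abs, hx₀n, mul_one]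
      exact hcabs
    constructor
    · have e : r.2.1 + c • x₀ = (r.2.1 + x₀) + (c - 1) • x₀ := by
        rw [sub_smul, one_smul]; abel
      have h4 : ‖r.2.1 + c • x₀‖ ≤ 1 + 23*δ := by
        rw [e]
        calc ‖(r.2.1 + x₀) + (c - 1) • x₀‖ ≤ ‖r.2.1 + x₀‖ + ‖(c - 1) • x₀‖ :=
              norm_add_le _ _
        _ ≤ 1 + 23*δ := by linarith
      refine (pt_single_le ht _ _).trans ?_
      nlinarith [norm_nonneg (r.2.1 + c • x₀)]
    · have e : r.2.1 - c • x₀ = (r.2.1 - x₀) - (c - 1) • x₀ := by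
        rw [sub_smul, one_smul]; abel
      have h4 : ‖r.2.1 - c • x₀‖ ≤ 1 + 23*δ := by
        rw [e]
        calc ‖(r.2.1 - x₀) - (c - 1) • x₀‖ ≤ ‖r.2.1 - x₀‖ + ‖(c - 1) • x₀‖ :=
              norm_sub_le _ _
        _ ≤ 1 + 23*δ := by linarith
      refine (pt_single_le ht _ _).trans ?_
      nlinarith [norm_nonneg (r.2.1 - c • x₀)]
  have hsumbound : ∀ g : ℝ × X × Y → Z, (∀ r ∈ L, ‖g r‖ ≤ r.1 * (1 + 23*δ)) →
      ‖(L.map g).sum‖ ≤ N * (1 + 23*δ) := by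
    intro g hg
    refine (myList.norm_sum_le L g).trans ?_
    have h1 : (L.map fun r => r.1 * (1+23*δ)).sum = N * (1+23*δ) := by
      have h2 := myList.mul_sum L (1+23*δ) (fun r : ℝ × X × Y => r.1)
      have e : (fun r : ℝ × X × Y => r.1 * (1+23*δ)) =
          fun r : ℝ × X × Y => (1+23*δ) * r.1 := by funext r; ring
      rw [e, h2, hNdef]; ring
    rw [← h1]
    exact myList.sum_le_sum L _ _ hg
  have hplus : ‖T + w‖ ≤ N * (1 + 23*δ) := by
    have e1 : T + w = (L.map fun r => r.1 • t (r.2.1 + c • x₀) r.2.2).sum := by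
      have e : (fun r : ℝ × X × Y => r.1 • t (r.2.1 + c • x₀) r.2.2) =
          fun r : ℝ × X × Y => r.1 • t r.2.1 r.2.2 + c • (r.1 • t x₀ r.2.2) := by
        funext r
        rw [pt_add_left ht, pt_smul_left ht, smul_add, smul_comm]
      rw [hw2, hTdef, e, myList.sum_map_add L _ _, myList.smul_sum L c _]
    rw [e1]
    refine hsumbound _ (fun r hr => ?_)
    rw [norm_smul, Real.norm_eq_abs, abs_of_nonneg (hLp r hr).1]
    exact mul_le_mul_of_nonneg_left (hxbound r hr).1 (hLp r hr).1
  have hminus : ‖T - w‖ ≤ N * (1 + 23*δ) := by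
    have e1 : T - w = (L.map fun r => r.1 • t (r.2.1 - c • x₀) r.2.2).sum := by
      have e : (fun r : ℝ × X × Y => r.1 • t (r.2.1 - c • x₀) r.2.2) =
          fun r : ℝ × X × Y => r.1 • t r.2.1 r.2.2 - c • (r.1 • t x₀ r.2.2) := by
        funext r
        rw [pt_sub_left ht, pt_smul_left ht, smul_sub, smul_comm]
      rw [hw2, hTdef, e, myList.sum_map_sub L _ _, myList.smul_sum L c _]
    rw [e1]
    refine hsumbound _ (fun r hr => ?_)
    rw [norm_smul, Real.norm_eq_abs, abs_of_nonneg (hLp r hr).1]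
    exact mul_le_mul_of_nonneg_left (hxbound r hr).2 (hLp r hr).1
  have hNf : N * (1 + 23*δ) ≤ (1 + 5*δ) * (1 + 23*δ) :=
    mul_le_mul_of_nonneg_right hNle (by linarith)
  refine ⟨w, hwn, ?_, ?_⟩
  · have e : z + w = (z - T) + (T + w) := by abel
    calc ‖z + w‖ ≤ ‖z - T‖ + ‖T + w‖ := by rw [e]; exact norm_add_le _ _
    _ ≤ 1 + ε := by nlinarith [hd2, hδε, hε, hzT, hplus, hNf]
  · have e : z - w = (z - T) + (T - w) := by abel
    calc ‖z - w‖ ≤ ‖z - T‖ + ‖T - w‖ := by rw [e]; exact norm_add_le _ _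
    _ ≤ 1 + ε := by nlinarith [hd2, hδε, hε, hzT, hminus, hNf]
end

section
/- If a Banach space X is octahedral, then for every N ∈ ℕ the N-fold injective symmetric tensor product ⊗̂_{ε,s,N} X is octahedral. -/
open Filter Topology

/-!
Octahedrality of `X` gives, for every finite-dimensional `E ≤ X` and `c < 1`, unit vectors
`a, b` with `‖y + l • a + m • b‖ ≥ c² (‖y‖ + |l| + |m|)` for `y ∈ E`. By Hahn–Banach, `c² f` on
`E` (for `‖f‖ ≤ 1`) then extends to a functional of norm `≤ 1` with arbitrary values in
`[-c², c²]` at `a` and `b`. Put `w = δ a` for odd `N` and `w = (δ a - δ b) / ‖δ a - δ b‖` for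
even `N`; for each `f` and each sign `σ` some such extension `h` has `σ h^N(w) ≥ c^{2N}`. For `u`
in the span of `δ(E)`, taking `σ` to be the sign of `f^N(u)` gives
`‖u + w‖ ≥ |h^N(u + w)| ≥ c^{2N} (|f^N(u)| + 1)`, and the supremum over `f` is
`c^{2N} (‖u‖ + 1)`. Since the span of the range of `δ` is dense, this is enough for
octahedrality.
-/

open Set Submodule

lemma exists_pos_lt_one_lt_pow {κ : ℝ} (hκ : κ < 1) (n : ℕ) :
    ∃ c : ℝ, 0 < c ∧ c < 1 ∧ κ < c ^ n := by
  have hlim : Tendsto (fun c : ℝ => c ^ n) (𝓝[<] 1) (𝓝 1) := by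
    simpa using ((continuous_pow n).tendsto (1 : ℝ)).mono_left nhdsWithin_le_nhds
  obtain ⟨c, ⟨hκc, hc₀⟩, hc₁⟩ := (((hlim.eventually_const_lt hκ).and
    (nhdsWithin_le_nhds (eventually_gt_nhds one_pos))).and self_mem_nhdsWithin).exists
  exact ⟨c, hc₀, hc₁, hκc⟩

theorem isOctahedral_of_dense {Z : Type*} [NormedAddCommGroup Z] {D : Set Z} (hD : Dense D)
    (H : ∀ (n : ℕ) (u : Fin n → Z), (∀ i, u i ∈ D) → ∀ κ < 1,
      ∃ w : Z, ‖w‖ = 1 ∧ ∀ i, κ * (‖u i‖ + 1) ≤ ‖u i + w‖) :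
    IsOctahedral Z := by
  intro n z hz ε hε
  set η := min ε 1 / 4 with hη
  have hη₀ : 0 < η := by positivity
  have hηε : 4 * η ≤ ε := by linarith [min_le_left ε 1, hη]
  have hη₁ : η ≤ 1 / 4 := by linarith [min_le_right ε 1, hη]
  choose u hu hzu using fun i => hD.exists_dist_lt (z i) hη₀
  obtain ⟨w, hw, huw⟩ := H n u hu (1 - η) (by linarith)
  refine ⟨w, hw, fun i => ?_⟩
  have hzu' : ‖z i - u i‖ < η := by simpa [dist_eq_norm] using hzu i
  have hu₁ : 1 - η ≤ ‖u i‖ := by linarith [norm_sub_norm_le (z i) (u i), hz i]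
  have hzw : ‖u i + w‖ ≤ ‖z i + w‖ + ‖z i - u i‖ := by
    have : u i + w = (z i + w) - (z i - u i) := by abel
    exact this ▸ norm_sub_le _ _
  have := mul_le_mul_of_nonneg_left (show 2 - η ≤ ‖u i‖ + 1 by linarith)
    (show 0 ≤ 1 - η by linarith)
  nlinarith [huw i]

section Octahedral

variable {X : Type*} [NormedAddCommGroup X]

lemma IsOctahedral.exists_lt_norm_add_of_finite (hX : IsOctahedral X) {t : Set X}
    (ht : t.Finite) (ht₁ : ∀ z ∈ t, ‖z‖ = 1) {ε : ℝ} (hε : 0 < ε) :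
    ∃ a : X, ‖a‖ = 1 ∧ ∀ z ∈ t, 2 - ε < ‖z + a‖ := by
  obtain ⟨n, z, rfl⟩ := ht.fin_embedding
  obtain ⟨a, ha, hza⟩ := hX n z (fun i => ht₁ _ (mem_range_self i)) ε hε
  exact ⟨a, ha, forall_mem_range.2 hza⟩

variable [NormedSpace ℝ X]

lemma exists_dual_comp_eq_of_le_norm {V : Type*} [AddCommGroup V] [Module ℝ V]
    (φ : V →ₗ[ℝ] X) (hφ : Function.Injective φ) (ψ : V →ₗ[ℝ] ℝ) (hψ : ∀ v, ψ v ≤ ‖φ v‖) :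
    ∃ g : X →L[ℝ] ℝ, ‖g‖ ≤ 1 ∧ ∀ v, g (φ v) = ψ v := by
  let e := LinearEquiv.ofInjective φ hφ
  let ψ' : LinearMap.range φ →ₗ[ℝ] ℝ := ψ ∘ₗ e.symm.toLinearMap
  have hψ' : ∀ x, ‖ψ' x‖ ≤ 1 * ‖x‖ := by
    intro x
    obtain ⟨v, rfl⟩ := e.surjective x
    have h₁ := hψ v
    have h₂ := hψ (-v)
    simp only [map_neg, norm_neg] at h₂
    show |ψ (e.symm (e v))| ≤ 1 * ‖φ v‖
    rw [e.symm_apply_apply, one_mul]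
    exact abs_le.2 ⟨by linarith, h₁⟩
  obtain ⟨g, hg, hgn⟩ := exists_extension_norm_eq _ (ψ'.mkContinuous 1 hψ')
  refine ⟨g, hgn ▸ LinearMap.mkContinuous_norm_le _ zero_le_one _, fun v => ?_⟩
  simpa [ψ', e] using hg (e v)

lemma ContinuousLinearMap.abs_apply_le_of_norm_le_one {f : X →L[ℝ] ℝ} (hf : ‖f‖ ≤ 1) (x : X) :
    |f x| ≤ ‖x‖ := by
  simpa using f.le_of_opNorm_le hf x

lemma le_norm_add_smul_of_lt_norm_add {y z a : X} {η l : ℝ} (hz : ‖z‖ ≤ 1) (ha : ‖a‖ ≤ 1)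
    (hza : 2 - η < ‖z + a‖) (hyz : ‖y - z‖ < η) (hl : 0 ≤ l) :
    (1 - 2 * η) * (1 + l) ≤ ‖y + l • a‖ := by
  obtain ⟨g, hg, hgza⟩ := exists_dual_vector'' ℝ (z + a)
  have hbound (x : X) : g x ≤ ‖x‖ := (abs_le.1 (g.abs_apply_le_of_norm_le_one hg x)).2
  have hsum : g z + g a = ‖z + a‖ := by simpa using hgza
  have hga : 1 - η < g a := by linarith [hbound z]
  have hgy : 1 - 2 * η < g y := by
    have : g z - g y ≤ ‖z - y‖ := by simpa using hbound (z - y)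
    linarith [hbound a, norm_sub_rev y z]
  have hla : l * (1 - 2 * η) ≤ l * g a :=
    mul_le_mul_of_nonneg_left (by linarith [(norm_nonneg _).trans_lt hyz]) hl
  calc (1 - 2 * η) * (1 + l) ≤ g y + l * g a := by linarith
    _ = g (y + l • a) := by simp
    _ ≤ ‖y + l • a‖ := hbound _

lemma le_norm_add_smul_of_forall_norm_eq_one {E : Submodule ℝ X} {a : X} {c : ℝ}
    (ha : ‖a‖ = 1) (hc : c ≤ 1)
    (H : ∀ y ∈ E, ‖y‖ = 1 → ∀ l : ℝ, 0 ≤ l → c * (1 + l) ≤ ‖y + l • a‖) :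
    ∀ y ∈ E, ∀ l : ℝ, c * (‖y‖ + |l|) ≤ ‖y + l • a‖ := by
  have hpos : ∀ y ∈ E, ∀ l : ℝ, 0 ≤ l → c * (‖y‖ + l) ≤ ‖y + l • a‖ := by
    intro y hy l hl
    rcases eq_or_ne y 0 with rfl | hy₀
    · simp only [norm_zero, zero_add, norm_smul, ha, mul_one, Real.norm_of_nonneg hl]
      nlinarith
    have hr : 0 < ‖y‖ := norm_pos_iff.2 hy₀
    have hunit := H (‖y‖⁻¹ • y) (E.smul_mem _ hy)
      (by rw [norm_smul, norm_inv, norm_norm, inv_mul_cancel₀ hr.ne']) (l / ‖y‖) (by positivity)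
    have hscale : y + l • a = ‖y‖ • (‖y‖⁻¹ • y + (l / ‖y‖) • a) := by
      rw [smul_add, smul_smul, smul_smul, mul_inv_cancel₀ hr.ne', one_smul,
        mul_div_cancel₀ _ hr.ne']
    rw [hscale, norm_smul, norm_norm]
    calc c * (‖y‖ + l) = ‖y‖ * (c * (1 + l / ‖y‖)) := by field_simp
      _ ≤ _ := mul_le_mul_of_nonneg_left hunit hr.le
  intro y hy l
  rcases le_or_gt 0 l with hl | hl
  · simpa [abs_of_nonneg hl] using hpos y hy l hl
  · have := hpos (-y) (E.neg_mem hy) (-l) (by linarith)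
    rwa [norm_neg, neg_smul, ← neg_add, norm_neg, ← abs_of_neg hl] at this

theorem IsOctahedral.exists_le_norm_add_smul (hX : IsOctahedral X) (E : Submodule ℝ X)
    [FiniteDimensional ℝ E] {c : ℝ} (hc : c < 1) :
    ∃ a : X, ‖a‖ = 1 ∧ ∀ y ∈ E, ∀ l : ℝ, c * (‖y‖ + |l|) ≤ ‖y + l • a‖ := by
  set η := (1 - c) / 2 with hη_def
  have hη : 0 < η := by linarith [hη_def]
  obtain ⟨t, hts, htf, hcover⟩ := (isCompact_sphere (0 : E) 1).finite_cover_balls hη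
  have ht₁ : ∀ z ∈ t, ‖(z : X)‖ = 1 := fun z hz => by simpa using hts hz
  obtain ⟨a, ha, hta⟩ := hX.exists_lt_norm_add_of_finite (htf.image (↑))
    (forall_mem_image.2 ht₁) hη
  refine ⟨a, ha, le_norm_add_smul_of_forall_norm_eq_one ha hc.le fun y hy hy₁ l hl => ?_⟩
  obtain ⟨z, hzt, hyz⟩ := mem_iUnion₂.1 (hcover (show (⟨y, hy⟩ : E) ∈ Metric.sphere 0 1 by
    simpa using hy₁))
  have := le_norm_add_smul_of_lt_norm_add (ht₁ z hzt).le ha.le (hta _ (mem_image_of_mem _ hzt))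
    (by simpa [dist_eq_norm] using hyz) hl
  rwa [show 1 - 2 * η = c by ring] at this

theorem IsOctahedral.exists_le_norm_add_smul_add_smul (hX : IsOctahedral X)
    (E : Submodule ℝ X) [FiniteDimensional ℝ E] {c : ℝ} (hc₀ : 0 ≤ c) (hc₁ : c < 1) :
    ∃ a b : X, ‖a‖ = 1 ∧ ‖b‖ = 1 ∧ ∀ y ∈ E, ∀ l m : ℝ,
      c ^ 2 * (‖y‖ + |l| + |m|) ≤ ‖y + l • a + m • b‖ := by
  obtain ⟨a, ha, hEa⟩ := hX.exists_le_norm_add_smul E hc₁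
  obtain ⟨b, hb, hEab⟩ := hX.exists_le_norm_add_smul (E ⊔ span ℝ {a}) hc₁
  refine ⟨a, b, ha, hb, fun y hy l m => ?_⟩
  have hya : y + l • a ∈ E ⊔ span ℝ {a} :=
    add_mem (mem_sup_left hy) (mem_sup_right (smul_mem _ _ (mem_span_singleton_self a)))
  have hm : 0 ≤ c * (1 - c) * |m| := by have := abs_nonneg m; positivity
  calc c ^ 2 * (‖y‖ + |l| + |m|) ≤ c * (c * (‖y‖ + |l|) + |m|) := by nlinarith
    _ ≤ c * (‖y + l • a‖ + |m|) := by gcongr; exact hEa y hy l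
    _ ≤ ‖y + l • a + m • b‖ := hEab _ hya m

theorem exists_dual_eq_smul_of_le_norm_add_smul_add_smul {E : Submodule ℝ X} {a b : X} {c : ℝ}
    (hc : 0 < c) (P : ∀ y ∈ E, ∀ l m : ℝ, c * (‖y‖ + |l| + |m|) ≤ ‖y + l • a + m • b‖)
    {f : X →L[ℝ] ℝ} (hf : ‖f‖ ≤ 1) {s t : ℝ} (hs : |s| ≤ 1) (ht : |t| ≤ 1) :
    ∃ h : X →L[ℝ] ℝ, ‖h‖ ≤ 1 ∧ (∀ y ∈ E, h y = c * f y) ∧ h a = c * s ∧ h b = c * t := by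
  let φ : E × ℝ × ℝ →ₗ[ℝ] X := E.subtype.coprod
    ((LinearMap.toSpanSingleton ℝ X a).coprod (LinearMap.toSpanSingleton ℝ X b))
  let ψ : E × ℝ × ℝ →ₗ[ℝ] ℝ := c • ((f : X →ₗ[ℝ] ℝ) ∘ₗ E.subtype).coprod
    ((LinearMap.toSpanSingleton ℝ ℝ s).coprod (LinearMap.toSpanSingleton ℝ ℝ t))
  have hφ (v : E × ℝ × ℝ) : φ v = v.1 + v.2.1 • a + v.2.2 • b := by simp [φ, add_assoc]
  have hψ (v : E × ℝ × ℝ) : ψ v = c * (f v.1 + v.2.1 * s + v.2.2 * t) := by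
    simp [ψ, add_assoc, mul_comm]
  have hP (v : E × ℝ × ℝ) : c * (‖(v.1 : X)‖ + |v.2.1| + |v.2.2|) ≤ ‖φ v‖ :=
    hφ v ▸ P _ v.1.2 _ _
  have hinj : Function.Injective φ := by
    refine (injective_iff_map_eq_zero φ).2 fun v hv => ?_
    have h₀ := hP v
    rw [hv, norm_zero] at h₀
    have h₁ := norm_nonneg (v.1 : X)
    have h₂ := abs_nonneg v.2.1
    have h₃ := abs_nonneg v.2.2
    refine Prod.ext (Subtype.ext (norm_eq_zero.1 ?_))
      (Prod.ext (abs_eq_zero.1 ?_) (abs_eq_zero.1 ?_))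
    all_goals nlinarith
  have hψφ (v : E × ℝ × ℝ) : ψ v ≤ ‖φ v‖ := by
    have hy := (abs_le.1 (f.abs_apply_le_of_norm_le_one hf v.1)).2
    have hl : v.2.1 * s ≤ |v.2.1| :=
      (le_abs_self _).trans (by rw [abs_mul]; exact mul_le_of_le_one_right (abs_nonneg _) hs)
    have hm : v.2.2 * t ≤ |v.2.2| :=
      (le_abs_self _).trans (by rw [abs_mul]; exact mul_le_of_le_one_right (abs_nonneg _) ht)
    rw [hψ]
    exact (mul_le_mul_of_nonneg_left (by linarith) hc.le).trans (hP v)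
  obtain ⟨g, hg, hgφ⟩ := exists_dual_comp_eq_of_le_norm φ hinj ψ hψφ
  refine ⟨g, hg, fun y hy => ?_, ?_, ?_⟩
  · simpa [hφ, hψ] using hgφ (⟨y, hy⟩, 0, 0)
  · simpa [hφ, hψ] using hgφ (0, 1, 0)
  · simpa [hφ, hψ] using hgφ (0, 0, 1)

end Octahedral

section SymmetricTensor

section Lists

variable {X Z : Type*} [AddCommMonoid Z] [Module ℝ Z] {N : ℕ} {δ : X → Z}

-- `l = [(r₁, x₁), …]` encodes the symmetric tensor `Σ rᵢ xᵢ^N`; `powSum N f l` is `f^N` applied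
-- to it.
def diagSum (δ : X → Z) (l : List (ℝ × X)) : Z := (l.map fun p => p.1 • δ p.2).sum

def powSum (N : ℕ) (f : X → ℝ) (l : List (ℝ × X)) : ℝ := (l.map fun p => p.1 * f p.2 ^ N).sum

@[simp] lemma diagSum_nil : diagSum δ [] = 0 := rfl

@[simp] lemma diagSum_cons (p : ℝ × X) (l : List (ℝ × X)) :
    diagSum δ (p :: l) = p.1 • δ p.2 + diagSum δ l := by
  simp [diagSum]

lemma diagSum_append (l l' : List (ℝ × X)) : diagSum δ (l ++ l') = diagSum δ l + diagSum δ l' := by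
  simp [diagSum]

lemma smul_diagSum (r : ℝ) (l : List (ℝ × X)) :
    r • diagSum δ l = diagSum δ (l.map fun p => (r * p.1, p.2)) := by
  induction l with
  | nil => simp
  | cons p l ih => simp [ih, smul_add, mul_smul]

@[simp] lemma powSum_nil (f : X → ℝ) : powSum N f [] = 0 := rfl

@[simp] lemma powSum_cons (f : X → ℝ) (p : ℝ × X) (l : List (ℝ × X)) :
    powSum N f (p :: l) = p.1 * f p.2 ^ N + powSum N f l := by
  simp [powSum]

lemma powSum_append (f : X → ℝ) (l l' : List (ℝ × X)) :
    powSum N f (l ++ l') = powSum N f l + powSum N f l' := by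
  simp [powSum]

lemma powSum_eq_pow_mul {f g : X → ℝ} {c : ℝ} {l : List (ℝ × X)}
    (h : ∀ p ∈ l, g p.2 = c * f p.2) : powSum N g l = c ^ N * powSum N f l := by
  induction l with
  | nil => simp
  | cons p l ih =>
    simp only [powSum_cons, h p List.mem_cons_self, ih fun q hq => h q (List.mem_cons_of_mem _ hq)]
    ring

lemma exists_diagSum_eq_of_mem_span {u : Z} (hu : u ∈ span ℝ (range δ)) :
    ∃ l : List (ℝ × X), diagSum δ l = u := by
  induction hu using Submodule.span_induction with
  | mem _ hx =>
    obtain ⟨x, rfl⟩ := hx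
    exact ⟨[(1, x)], by simp⟩
  | zero => exact ⟨[], rfl⟩
  | add _ _ _ _ h₁ h₂ =>
    obtain ⟨l₁, rfl⟩ := h₁
    obtain ⟨l₂, rfl⟩ := h₂
    exact ⟨l₁ ++ l₂, diagSum_append _ _⟩
  | smul r _ _ h =>
    obtain ⟨l, rfl⟩ := h
    exact ⟨_, (smul_diagSum r l).symm⟩

end Lists

variable {X Z : Type*} [NormedAddCommGroup X] [NormedSpace ℝ X]
  [NormedAddCommGroup Z] [NormedSpace ℝ Z] {N : ℕ} {δ : X → Z}

lemma abs_powSum_le {f : X →L[ℝ] ℝ} (hf : ‖f‖ ≤ 1) (l : List (ℝ × X)) :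
    |powSum N f l| ≤ (l.map fun p => |p.1| * ‖p.2‖ ^ N).sum := by
  induction l with
  | nil => simp
  | cons p l ih =>
    rw [powSum_cons, List.map_cons, List.sum_cons]
    refine (abs_add_le _ _).trans (add_le_add ?_ ih)
    rw [abs_mul, abs_pow]
    gcongr
    exact f.abs_apply_le_of_norm_le_one hf _

def IsSignedPeak (N : ℕ) (E : Submodule ℝ X) (c : ℝ) (w : List (ℝ × X)) : Prop :=
  ∀ f : X →L[ℝ] ℝ, ‖f‖ ≤ 1 → ∀ σ : ℝ, (σ = 1 ∨ σ = -1) →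
    ∃ h : X →L[ℝ] ℝ, ‖h‖ ≤ 1 ∧ (∀ y ∈ E, h y = c * f y) ∧ c ^ N ≤ σ * powSum N h w

namespace IsInjSymTensorProduct

variable (hδ : IsInjSymTensorProduct X N Z δ)
include hδ

lemma norm_diagSum (l : List (ℝ × X)) :
    ‖diagSum δ l‖ = sSup {s : ℝ | ∃ f : X →L[ℝ] ℝ, ‖f‖ ≤ 1 ∧ s = |powSum N f l|} :=
  hδ.2 l

lemma abs_powSum_le_norm {f : X →L[ℝ] ℝ} (hf : ‖f‖ ≤ 1) (l : List (ℝ × X)) :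
    |powSum N f l| ≤ ‖diagSum δ l‖ := by
  rw [hδ.norm_diagSum]
  refine le_csSup ⟨(l.map fun p => |p.1| * ‖p.2‖ ^ N).sum, ?_⟩ ⟨f, hf, rfl⟩
  rintro _ ⟨g, hg, rfl⟩
  exact abs_powSum_le hg l

lemma norm_diagSum_le {l : List (ℝ × X)} {C : ℝ}
    (H : ∀ f : X →L[ℝ] ℝ, ‖f‖ ≤ 1 → |powSum N f l| ≤ C) : ‖diagSum δ l‖ ≤ C := by
  rw [hδ.norm_diagSum]
  refine csSup_le ⟨_, 0, by simp, rfl⟩ ?_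
  rintro _ ⟨f, hf, rfl⟩
  exact H f hf

lemma norm_apply (x : X) : ‖δ x‖ = ‖x‖ ^ N := by
  have hx : diagSum δ [(1, x)] = δ x := by simp
  refine le_antisymm ?_ ?_
  · rw [← hx]
    refine hδ.norm_diagSum_le fun f hf => ?_
    simpa using pow_le_pow_left₀ (abs_nonneg _) (f.abs_apply_le_of_norm_le_one hf x) N
  · obtain ⟨g, hg, hgx⟩ := exists_dual_vector'' ℝ x
    simpa [hgx] using hδ.abs_powSum_le_norm hg [(1, x)]

lemma norm_sub_le_one_of_even (hN : Even N) {a b : X} (ha : ‖a‖ ≤ 1) (hb : ‖b‖ ≤ 1) :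
    ‖δ a - δ b‖ ≤ 1 := by
  have hab : diagSum δ [(1, a), (-1, b)] = δ a - δ b := by simp [sub_eq_add_neg]
  rw [← hab]
  refine hδ.norm_diagSum_le fun f hf => ?_
  have hpow {x : X} (hx : ‖x‖ ≤ 1) : 0 ≤ f x ^ N ∧ f x ^ N ≤ 1 :=
    ⟨hN.pow_nonneg _, hN.pow_abs (f x) ▸
      pow_le_one₀ (abs_nonneg _) ((f.abs_apply_le_of_norm_le_one hf x).trans hx)⟩
  have := hpow ha
  have := hpow hb
  simp only [powSum_cons, powSum_nil]
  rw [abs_le]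
  constructor <;> linarith

section SignedPeak

variable {E : Submodule ℝ X} {a b : X} {c : ℝ} (hc : 0 < c)
  (P : ∀ y ∈ E, ∀ l m : ℝ, c * (‖y‖ + |l| + |m|) ≤ ‖y + l • a + m • b‖)
include hc P

lemma exists_signedPeak_of_odd (hN : Odd N) (ha : ‖a‖ = 1) :
    ∃ w : List (ℝ × X), ‖diagSum δ w‖ = 1 ∧ IsSignedPeak N E c w := by
  refine ⟨[(1, a)], by simp [hδ.norm_apply, ha], fun f hf σ hσ => ?_⟩
  have hσ₁ : |σ| ≤ 1 := by rcases hσ with rfl | rfl <;> simp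
  obtain ⟨h, hh, hE, hha, -⟩ :=
    exists_dual_eq_smul_of_le_norm_add_smul_add_smul hc P hf hσ₁ (t := 0) (by simp)
  refine ⟨h, hh, hE, ?_⟩
  rcases hσ with rfl | rfl <;> simp [hha, hN.neg_pow]

lemma exists_signedPeak_of_even (hN₀ : N ≠ 0) (hN : Even N) (ha : ‖a‖ ≤ 1) (hb : ‖b‖ ≤ 1) :
    ∃ w : List (ℝ × X), ‖diagSum δ w‖ = 1 ∧ IsSignedPeak N E c w := by
  set d := ‖δ a - δ b‖
  obtain ⟨h₀, hh₀, -, hh₀a, hh₀b⟩ := exists_dual_eq_smul_of_le_norm_add_smul_add_smul hc P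
    (f := 0) (by simp) (s := 1) (t := 0) (by simp) (by simp)
  have hd : c ^ N ≤ d := by
    have := hδ.abs_powSum_le_norm hh₀ [(1, a), (-1, b)]
    simpa [hh₀a, hh₀b, zero_pow hN₀, abs_of_pos hc, sub_eq_add_neg, d] using this
  have hd₀ : 0 < d := (pow_pos hc N).trans_le hd
  have hd₁ : 1 ≤ d⁻¹ := (one_le_inv₀ hd₀).2 (hδ.norm_sub_le_one_of_even hN ha hb)
  refine ⟨[(d⁻¹, a), (-d⁻¹, b)], ?_, fun f hf σ hσ => ?_⟩
  · have : diagSum δ [(d⁻¹, a), (-d⁻¹, b)] = d⁻¹ • (δ a - δ b) := by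
      simp [sub_eq_add_neg]
    rw [this, norm_smul, norm_inv, norm_norm, inv_mul_cancel₀ hd₀.ne']
  rcases hσ with rfl | rfl
  · obtain ⟨h, hh, hE, hha, hhb⟩ := exists_dual_eq_smul_of_le_norm_add_smul_add_smul hc P hf
      (s := 1) (t := 0) (by simp) (by simp)
    refine ⟨h, hh, hE, ?_⟩
    simpa [hha, hhb, zero_pow hN₀] using le_mul_of_one_le_left (pow_nonneg hc.le N) hd₁
  · obtain ⟨h, hh, hE, hha, hhb⟩ := exists_dual_eq_smul_of_le_norm_add_smul_add_smul hc P hf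
      (s := 0) (t := 1) (by simp) (by simp)
    refine ⟨h, hh, hE, ?_⟩
    simpa [hha, hhb, zero_pow hN₀] using le_mul_of_one_le_left (pow_nonneg hc.le N) hd₁

lemma exists_signedPeak (hN : N ≠ 0) (ha : ‖a‖ = 1) (hb : ‖b‖ = 1) :
    ∃ w : List (ℝ × X), ‖diagSum δ w‖ = 1 ∧ IsSignedPeak N E c w :=
  (Nat.even_or_odd N).elim (hδ.exists_signedPeak_of_even hc P hN · ha.le hb.le)
    (hδ.exists_signedPeak_of_odd hc P · ha)

end SignedPeak

lemma pow_mul_le_norm_diagSum_append {E : Submodule ℝ X} {c : ℝ} (hc : 0 < c)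
    {w : List (ℝ × X)} (hw : IsSignedPeak N E c w) {l : List (ℝ × X)} (hl : ∀ p ∈ l, p.2 ∈ E) :
    c ^ N * (‖diagSum δ l‖ + 1) ≤ ‖diagSum δ (l ++ w)‖ := by
  have hcN : 0 < c ^ N := pow_pos hc N
  suffices ‖diagSum δ l‖ ≤ ‖diagSum δ (l ++ w)‖ / c ^ N - 1 by
    rw [le_sub_iff_add_le, le_div_iff₀ hcN] at this
    linarith
  refine hδ.norm_diagSum_le fun f hf => ?_
  obtain ⟨σ, hσ, hσV⟩ : ∃ σ : ℝ, (σ = 1 ∨ σ = -1) ∧ σ * powSum N f l = |powSum N f l| := by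
    rcases le_or_gt 0 (powSum N f l) with hV | hV
    · exact ⟨1, .inl rfl, by rw [one_mul, abs_of_nonneg hV]⟩
    · exact ⟨-1, .inr rfl, by rw [neg_one_mul, abs_of_neg hV]⟩
  obtain ⟨h, hh, hE, hhw⟩ := hw f hf σ hσ
  have hhl : powSum N h l = c ^ N * powSum N f l := powSum_eq_pow_mul fun p hp => hE _ (hl p hp)
  have hσle (x : ℝ) : σ * x ≤ |x| := by rcases hσ with rfl | rfl <;> simp [le_abs_self, neg_le_abs]
  rw [le_sub_iff_add_le, le_div_iff₀ hcN]
  calc (|powSum N f l| + 1) * c ^ N ≤ c ^ N * (σ * powSum N f l) + σ * powSum N h w := by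
        rw [hσV]; linarith
    _ = σ * powSum N h (l ++ w) := by rw [powSum_append, hhl]; ring
    _ ≤ |powSum N h (l ++ w)| := hσle _
    _ ≤ ‖diagSum δ (l ++ w)‖ := hδ.abs_powSum_le_norm hh _

theorem exists_norm_eq_one_le_norm_add (hX : IsOctahedral X) (hN : N ≠ 0)
    (E : Submodule ℝ X) [FiniteDimensional ℝ E] {κ : ℝ} (hκ : κ < 1) :
    ∃ w : Z, ‖w‖ = 1 ∧ ∀ l : List (ℝ × X), (∀ p ∈ l, p.2 ∈ E) →
      κ * (‖diagSum δ l‖ + 1) ≤ ‖diagSum δ l + w‖ := by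
  obtain ⟨c, hc₀, hc₁, hκc⟩ := exists_pos_lt_one_lt_pow hκ (2 * N)
  obtain ⟨a, b, ha, hb, P⟩ := hX.exists_le_norm_add_smul_add_smul E hc₀.le hc₁
  obtain ⟨w, hw, hpeak⟩ := hδ.exists_signedPeak (pow_pos hc₀ 2) P hN ha hb
  refine ⟨diagSum δ w, hw, fun l hl => ?_⟩
  rw [← diagSum_append]
  refine le_trans ?_ (hδ.pow_mul_le_norm_diagSum_append (pow_pos hc₀ 2) hpeak hl)
  rw [← pow_mul]
  exact mul_le_mul_of_nonneg_right hκc.le (by positivity)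

end IsInjSymTensorProduct

end SymmetricTensor

theorem statement10_general (X : Type*) [NormedAddCommGroup X] [NormedSpace ℝ X]
    (hX : IsOctahedral X) (N : ℕ) (hN : 1 ≤ N)
    (Z : Type*) [NormedAddCommGroup Z] [NormedSpace ℝ Z]
    (δ : X → Z) (hδ : IsInjSymTensorProduct X N Z δ) :
    IsOctahedral Z := by
  refine isOctahedral_of_dense (dense_iff_topologicalClosure_eq_top.2 hδ.1)
    fun n u hu κ hκ => ?_
  choose l hl using fun i => exists_diagSum_eq_of_mem_span (hu i)
  let S : Set X := ⋃ i, Prod.snd '' {p | p ∈ l i}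
  have : FiniteDimensional ℝ (span ℝ S) :=
    FiniteDimensional.span_of_finite ℝ (finite_iUnion fun i => (l i).finite_toSet.image _)
  obtain ⟨w, hw, hle⟩ := hδ.exists_norm_eq_one_le_norm_add hX (by omega) (span ℝ S) hκ
  refine ⟨w, hw, fun i => ?_⟩
  simpa [hl i] using hle (l i) fun p hp => subset_span (mem_iUnion.2 ⟨i, p, hp, rfl⟩)

theorem statement10 (X : Type*) [NormedAddCommGroup X] [NormedSpace ℝ X] [CompleteSpace X]
    (hX : IsOctahedral X) (N : ℕ) (hN : 1 ≤ N)
    (Z : Type*) [NormedAddCommGroup Z] [NormedSpace ℝ Z] [CompleteSpace Z]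
    (δ : X → Z) (hδ : IsInjSymTensorProduct X N Z δ) :
    IsOctahedral Z :=
  statement10_general X hX N hN Z δ hδ
end

section
/- A Banach space X is weakly octahedral if and only if for every finite-dimensional subspace E of X, every x* ∈ B_{X*}, and every ε > 0, there exist y ∈ S_X and x₁*, x₂* ∈ X* with ‖x₁*‖, ‖x₂*‖ ≤ 1 + ε, x₁*|_E = x₂*|_E = x*|_E, and x₁*(y) − x₂*(y) > 2 − ε. -/
open Filter Topology

/-! Forward direction: choose `y` by weak octahedrality for a finite `η`-net of the unit sphere
of `E`; since the inequality is homogeneous, this gives `|x*(e)| + |t| ≤ (1 + ε) ‖e + t y‖` on all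
of `E ⊕ ℝ y`. Hence `e + t y ↦ x*(e) ± t` have norm at most `1 + ε` there, and Hahn–Banach
extends them to `x₁*, x₂*`.

Backward direction: take `E` the span of the `xᵢ`. Then `x₁*(y) ≈ 1` and `x₂*(y) ≈ -1`, so on
`xᵢ ± t y` whichever of `x₁*, x₂*` matches the sign of `x*(xᵢ)` has value `≈ |x*(xᵢ)| + t`. -/

open Set Submodule

section

variable {X : Type*} [NormedAddCommGroup X] [NormedSpace ℝ X]

theorem Submodule.exists_fin_unit_net (E : Submodule ℝ X) [FiniteDimensional ℝ E] {δ : ℝ}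
    (hδ : 0 < δ) :
    ∃ (n : ℕ) (z : Fin n → X), (∀ i, ‖z i‖ = 1) ∧ ∀ u ∈ E, ‖u‖ = 1 → ∃ i, ‖u - z i‖ < δ := by
  set S : Set X := (↑) '' Metric.sphere (0 : E) 1
  have hS : ∀ u ∈ E, ‖u‖ = 1 → u ∈ S := fun u hu hu1 =>
    ⟨⟨u, hu⟩, mem_sphere_zero_iff_norm.2 hu1, rfl⟩
  obtain ⟨T, hTS, hT, hST⟩ :=
    ((isCompact_sphere (0 : E) 1).image continuous_subtype_val).finite_cover_balls hδ
  obtain ⟨n, z, rfl⟩ := hT.fin_embedding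
  refine ⟨n, z, fun i => ?_, fun u hu hu1 => ?_⟩
  · obtain ⟨v, hv, hvz⟩ := hTS (mem_range_self i)
    rw [← hvz]
    simpa using hv
  · obtain ⟨_, ⟨i, rfl⟩, hi⟩ := mem_iUnion₂.1 (hST (hS u hu hu1))
    exact ⟨i, mem_ball_iff_norm.1 hi⟩

theorem abs_add_abs_le_of_forall_norm_eq_one {E : Submodule ℝ X} {f : X →L[ℝ] ℝ} {y : X} {C : ℝ}
    (hy : ‖y‖ = 1) (hC : 1 ≤ C)
    (h : ∀ u ∈ E, ‖u‖ = 1 → ∀ s : ℝ, |f u| + |s| ≤ C * ‖u + s • y‖) :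
    ∀ e ∈ E, ∀ t : ℝ, |f e| + |t| ≤ C * ‖e + t • y‖ := by
  intro e he t
  rcases eq_or_ne e 0 with rfl | he0
  · rw [map_zero, abs_zero, zero_add, zero_add, norm_smul, hy, mul_one, Real.norm_eq_abs]
    nlinarith [abs_nonneg t]
  have hr : 0 < ‖e‖ := norm_pos_iff.2 he0
  have hsplit : e + t • y = ‖e‖ • (‖e‖⁻¹ • e + (‖e‖⁻¹ * t) • y) := by
    rw [smul_add, smul_smul, smul_smul, mul_inv_cancel_left₀ hr.ne', mul_inv_cancel₀ hr.ne',
      one_smul]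
  have key := h (‖e‖⁻¹ • e) (E.smul_mem _ he) (norm_smul_inv_norm he0) (‖e‖⁻¹ * t)
  rw [map_smul, smul_eq_mul, abs_mul, abs_mul, abs_inv, abs_norm, ← mul_add] at key
  rw [hsplit, norm_smul, norm_norm]
  calc |f e| + |t| = ‖e‖ * (‖e‖⁻¹ * (|f e| + |t|)) := by field_simp
    _ ≤ ‖e‖ * (C * ‖‖e‖⁻¹ • e + (‖e‖⁻¹ * t) • y‖) := by gcongr
    _ = _ := by ring

theorem IsWeaklyOctahedral.exists_forall_abs_add_abs_le (hW : IsWeaklyOctahedral X)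
    (E : Submodule ℝ X) [FiniteDimensional ℝ E] (f : X →L[ℝ] ℝ) (hf : ‖f‖ ≤ 1) {ε : ℝ}
    (hε : 0 < ε) :
    ∃ y : X, ‖y‖ = 1 ∧ ∀ e ∈ E, ∀ t : ℝ, |f e| + |t| ≤ (1 + ε) * ‖e + t • y‖ := by
  set η := min ε 1 / 16
  have hη : 0 < η := by positivity
  have hηε : 16 * η ≤ ε := by simp only [η]; linarith [min_le_left ε 1]
  have hη1 : 16 * η ≤ 1 := by simp only [η]; linarith [min_le_right ε 1]
  have hf_le : ∀ x, |f x| ≤ ‖x‖ := fun x => by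
    simpa using f.le_of_opNorm_le hf x
  obtain ⟨n, z, hz, hnet⟩ := E.exists_fin_unit_net hη
  obtain ⟨y, hy, hWy⟩ := hW n z hz f hf η hη
  have hz_bound : ∀ i (s : ℝ), (1 - η) * (|f (z i)| + |s|) ≤ ‖z i + s • y‖ := by
    intro i s
    rcases lt_trichotomy s 0 with hs | rfl | hs
    · simpa [abs_of_neg hs, sub_eq_add_neg] using (hWy i (-s) (neg_pos.2 hs)).2
    · rw [abs_zero, add_zero, zero_smul, add_zero, hz i]
      nlinarith [hf_le (z i), hz i, abs_nonneg (f (z i))]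
    · simpa [abs_of_pos hs] using (hWy i s hs).1
  have h_unit : ∀ u ∈ E, ‖u‖ = 1 → ∀ s : ℝ, |f u| + |s| ≤ (1 + ε) * ‖u + s • y‖ := by
    intro u hu hu1 s
    obtain ⟨i, hi⟩ := hnet u hu hu1
    have h_far : 1 - |s| ≤ ‖u + s • y‖ := by
      have := norm_sub_norm_le u (-(s • y))
      rw [sub_neg_eq_add, norm_neg, norm_smul, hy, mul_one, hu1, Real.norm_eq_abs] at this
      exact this
    have h_near : (1 - η) * (|f u| + |s|) - 2 * η ≤ ‖u + s • y‖ := by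
      have hfu : |f u| - η ≤ |f (z i)| := by
        have := (abs_sub_abs_le_abs_sub (f u) (f (z i))).trans (map_sub f u (z i) ▸ hf_le _)
        linarith
      have hnorm : ‖z i + s • y‖ - η ≤ ‖u + s • y‖ := by
        have := norm_sub_norm_le (z i + s • y) (u + s • y)
        rw [add_sub_add_right_eq_sub, norm_sub_rev] at this
        linarith
      nlinarith [hz_bound i s]
    -- For `|f u| + |s| ≥ 1/2` the additive error `2η` is absorbed into the factor `1 + ε`;
    -- otherwise `1 - |s|` alone is large enough.
    rcases le_or_gt (1 / 2) (|f u| + |s|) with hA | hA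
    · have hN : (1 - 5 * η) * (|f u| + |s|) ≤ ‖u + s • y‖ := by nlinarith
      have hcoef : 1 ≤ (1 + ε) * (1 - 5 * η) := by nlinarith
      nlinarith [abs_nonneg (f u), abs_nonneg s]
    · nlinarith [abs_nonneg (f u), abs_nonneg s, norm_nonneg (u + s • y)]
  exact ⟨y, hy, abs_add_abs_le_of_forall_norm_eq_one hy (by linarith) h_unit⟩

theorem exists_extension_of_abs_add_abs_le {E : Submodule ℝ X} {f : X →L[ℝ] ℝ} {y : X} {C : ℝ}
    (h : ∀ e ∈ E, ∀ t : ℝ, |f e| + |t| ≤ C * ‖e + t • y‖) {c : ℝ} (hc : |c| ≤ 1) :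
    ∃ g : X →L[ℝ] ℝ, ‖g‖ ≤ C ∧ (∀ e ∈ E, g e = f e) ∧ g y = c := by
  have hyE : y ∉ E := fun hy => by
    have := h (-y) (E.neg_mem hy) 1
    rw [one_smul, neg_add_cancel, norm_zero, mul_zero, abs_one] at this
    linarith [abs_nonneg (f (-y))]
  have hC : 0 ≤ C := by
    have := h 0 E.zero_mem 1
    rw [map_zero, abs_zero, abs_one, zero_add, one_smul, zero_add] at this
    nlinarith [norm_nonneg y]
  let g₀ := (LinearPMap.mk E (f.toLinearMap.domRestrict E)).supSpanSingleton y c hyE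
  have hg₀ : ∀ e (he : e ∈ E) (a : ℝ), g₀ ⟨e + a • y, mem_sup.2
      ⟨e, he, _, mem_span_singleton.2 ⟨a, rfl⟩, rfl⟩⟩ = f e + a * c :=
    fun e he a => LinearPMap.supSpanSingleton_apply_mk _ y c hyE e he a
  have hbound : ∀ x : g₀.domain, ‖g₀.toFun x‖ ≤ C * ‖x‖ := by
    rintro ⟨x, hx⟩
    obtain ⟨e, he, _, hw, rfl⟩ := mem_sup.1 hx
    obtain ⟨a, rfl⟩ := mem_span_singleton.1 hw
    calc ‖g₀.toFun _‖ = |f e + a * c| := congrArg abs (hg₀ e he a)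
      _ ≤ |f e| + |a| := (abs_add_le _ _).trans (by
          rw [abs_mul]; nlinarith [abs_nonneg a])
      _ ≤ C * ‖e + a • y‖ := h e he a
  obtain ⟨g, hg, hg_norm⟩ := exists_extension_norm_eq g₀.domain (g₀.toFun.mkContinuous C hbound)
  refine ⟨g, hg_norm ▸ LinearMap.mkContinuous_norm_le _ hC _, fun e he => ?_, ?_⟩
  · simpa using (hg ⟨e + (0 : ℝ) • y, _⟩).trans (hg₀ e he 0)
  · simpa using (hg ⟨0 + (1 : ℝ) • y, _⟩).trans (hg₀ 0 E.zero_mem 1)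

theorem abs_add_mul_le_norm_add_smul_of_separating {g₁ g₂ : X →L[ℝ] ℝ} {x y : X} {δ t : ℝ}
    (h₁ : ‖g₁‖ ≤ 1 + δ) (h₂ : ‖g₂‖ ≤ 1 + δ) (hx : g₁ x = g₂ x) (hy : ‖y‖ ≤ 1)
    (hsep : 2 - δ < g₁ y - g₂ y) (ht : 0 ≤ t) :
    |g₁ x| + (1 - 2 * δ) * t ≤ (1 + δ) * ‖x + t • y‖ := by
  have hg : ∀ {g : X →L[ℝ] ℝ}, ‖g‖ ≤ 1 + δ → ∀ v, |g v| ≤ (1 + δ) * ‖v‖ := fun {g} hg v => by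
    simpa using g.le_of_opNorm_le hg v
  have hδ : 0 ≤ 1 + δ := (norm_nonneg _).trans h₁
  have hy₁ : 1 - 2 * δ ≤ g₁ y := by
    linarith [neg_abs_le (g₂ y), hg h₂ y, mul_le_mul_of_nonneg_left hy hδ]
  have hy₂ : 1 - 2 * δ ≤ -g₂ y := by
    linarith [le_abs_self (g₁ y), hg h₁ y, mul_le_mul_of_nonneg_left hy hδ]
  have h₁v := (le_abs_self _).trans (hg h₁ (x + t • y))
  have h₂v := (neg_le_abs _).trans (hg h₂ (x + t • y))
  rw [map_add, map_smul, smul_eq_mul] at h₁v h₂v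
  have ht₁ := mul_le_mul_of_nonneg_left hy₁ ht
  have ht₂ := mul_le_mul_of_nonneg_left hy₂ ht
  rcases le_or_gt 0 (g₁ x) with hpos | hneg
  · rw [abs_of_nonneg hpos]
    linarith
  · rw [abs_of_neg hneg]
    linarith

theorem le_norm_add_smul_of_separating {g₁ g₂ : X →L[ℝ] ℝ} {x y : X} {ε t : ℝ}
    (h₁ : ‖g₁‖ ≤ 1 + ε / 3) (h₂ : ‖g₂‖ ≤ 1 + ε / 3) (hx : g₁ x = g₂ x) (hy : ‖y‖ ≤ 1)
    (hsep : 2 - ε / 3 < g₁ y - g₂ y) (ht : 0 ≤ t) (hε : 0 ≤ ε) :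
    (1 - ε) * (|g₁ x| + t) ≤ ‖x + t • y‖ ∧ (1 - ε) * (|g₁ x| + t) ≤ ‖x - t • y‖ := by
  have hplus := abs_add_mul_le_norm_add_smul_of_separating h₁ h₂ hx hy hsep ht
  have hminus := abs_add_mul_le_norm_add_smul_of_separating h₂ h₁ hx.symm
    ((norm_neg y).trans_le hy) (by rw [map_neg, map_neg]; linarith) ht
  rw [← hx, smul_neg, ← sub_eq_add_neg] at hminus
  have hcoef : (1 + ε / 3) * ((1 - ε) * (|g₁ x| + t)) ≤ |g₁ x| + (1 - 2 * (ε / 3)) * t := by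
    nlinarith [abs_nonneg (g₁ x), mul_nonneg hε (abs_nonneg (g₁ x)),
      mul_nonneg (mul_nonneg hε hε) ht]
  have hpos : 0 < 1 + ε / 3 := by positivity
  exact ⟨le_of_mul_le_mul_left (hcoef.trans hplus) hpos,
    le_of_mul_le_mul_left (hcoef.trans hminus) hpos⟩

end

theorem statement11_general (X : Type*) [NormedAddCommGroup X] [NormedSpace ℝ X] :
    IsWeaklyOctahedral X ↔
      ∀ E : Submodule ℝ X, FiniteDimensional ℝ E →
        ∀ f : X →L[ℝ] ℝ, ‖f‖ ≤ 1 → ∀ ε : ℝ, 0 < ε →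
          ∃ (y : X) (f₁ f₂ : X →L[ℝ] ℝ), ‖y‖ = 1 ∧
            ‖f₁‖ ≤ 1 + ε ∧ ‖f₂‖ ≤ 1 + ε ∧
            (∀ e ∈ E, f₁ e = f e ∧ f₂ e = f e) ∧
            f₁ y - f₂ y > 2 - ε := by
  constructor
  · intro hW E _ f hf ε hε
    obtain ⟨y, hy, hyE⟩ := hW.exists_forall_abs_add_abs_le E f hf hε
    obtain ⟨f₁, hf₁, hf₁E, hf₁y⟩ := exists_extension_of_abs_add_abs_le hyE (c := 1) (by simp)
    obtain ⟨f₂, hf₂, hf₂E, hf₂y⟩ := exists_extension_of_abs_add_abs_le hyE (c := -1) (by simp)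
    refine ⟨y, f₁, f₂, hy, hf₁, hf₂, fun e he => ⟨hf₁E e he, hf₂E e he⟩, ?_⟩
    rw [hf₁y, hf₂y]
    linarith
  · intro h n z _ f hf ε hε
    obtain ⟨y, f₁, f₂, hy, hf₁, hf₂, hE, hsep⟩ := h (span ℝ (range z))
      (FiniteDimensional.span_of_finite ℝ (finite_range z)) f hf (ε / 3) (by positivity)
    refine ⟨y, hy, fun i t ht => ?_⟩
    obtain ⟨hf₁z, hf₂z⟩ := hE (z i) (subset_span (mem_range_self i))
    rw [← hf₁z]
    exact le_norm_add_smul_of_separating hf₁ hf₂ (hf₁z.trans hf₂z.symm) hy.le hsep ht.le hε.le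

theorem statement11 (X : Type*) [NormedAddCommGroup X] [NormedSpace ℝ X] [CompleteSpace X] :
    IsWeaklyOctahedral X ↔
      ∀ E : Submodule ℝ X, FiniteDimensional ℝ E →
        ∀ f : X →L[ℝ] ℝ, ‖f‖ ≤ 1 → ∀ ε : ℝ, 0 < ε →
          ∃ (y : X) (f₁ f₂ : X →L[ℝ] ℝ), ‖y‖ = 1 ∧
            ‖f₁‖ ≤ 1 + ε ∧ ‖f₂‖ ≤ 1 + ε ∧
            (∀ e ∈ E, f₁ e = f e ∧ f₂ e = f e) ∧
            f₁ y - f₂ y > 2 - ε :=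
  statement11_general X
end

section
/- Let X be a weakly almost square Banach space and Y ⊆ X a closed subspace such that the quotient X/Y has the Schur property. Then Y is weakly almost square. -/
open Filter Topology

private lemma aux_tendsto_norm_congr {X : Type*} [SeminormedAddCommGroup X]
    (a b : ℕ → X) (l : ℝ)
    (hd : Tendsto (fun k => ‖a k - b k‖) atTop (nhds 0))
    (ha : Tendsto (fun k => ‖a k‖) atTop (nhds l)) :
    Tendsto (fun k => ‖b k‖) atTop (nhds l) := by
  have h0 : Tendsto (fun k => ‖b k‖ - ‖a k‖) atTop (nhds 0) := by
    refine squeeze_zero_norm (fun k => ?_) hd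
    simpa [Real.norm_eq_abs, norm_sub_rev (a k) (b k)] using
      abs_norm_sub_norm_le (b k) (a k)
  simpa using h0.add ha

theorem statement14 (X : Type*) [NormedAddCommGroup X] [NormedSpace ℝ X] [CompleteSpace X]
    (hX : IsWASQ X) (Y : Submodule ℝ X) (hYclosed : IsClosed (Y : Set X))
    (hSchur : HasSchurProperty (X ⧸ Y)) :
    IsWASQ ↥Y := by
  intro y hy
  have hyX : ‖(y : X)‖ = 1 := hy
  obtain ⟨w, hw1, hw2, hwp, hwm, hwf⟩ := hX (y : X) hyX
  -- quotient map as a continuous linear map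
  let Q : X →L[ℝ] X ⧸ Y :=
    LinearMap.mkContinuous Y.mkQ 1 (fun x => by
      simpa using Submodule.Quotient.norm_mk_le Y x)
  have hQmk : ∀ x : X, Q x = Submodule.Quotient.mk x := fun x => rfl
  -- weak convergence of Q (w k) to 0, then Schur gives norm convergence
  have hQ0 : Tendsto (fun k => ‖Q (w k) - 0‖) atTop (nhds 0) := by
    refine hSchur (fun k => Q (w k)) 0 (fun f => ?_)
    simpa using hwf (f.comp Q)
  have hQ0' : Tendsto (fun k => ‖Q (w k)‖) atTop (nhds 0) := by simpa using hQ0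
  -- representatives
  have hex : ∀ k : ℕ, ∃ m : X, Submodule.Quotient.mk m = Q (w k) ∧
      ‖m‖ < ‖Q (w k)‖ + 1 / (k + 1) := fun k =>
    Submodule.Quotient.norm_mk_lt (Q (w k)) (by positivity)
  choose m hm hmlt using hex
  have hmem : ∀ k, w k - m k ∈ Y := by
    intro k
    have : (Submodule.Quotient.mk (m k) : X ⧸ Y) = Submodule.Quotient.mk (w k) := by
      rw [hm k, hQmk]
    have h' := (Submodule.Quotient.eq Y).mp this
    simpa using Y.neg_mem h'
  set u : ℕ → X := fun k => w k - m k with hu_def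
  have hm0 : Tendsto (fun k => ‖m k‖) atTop (nhds 0) := by
    have hb : Tendsto (fun k : ℕ => ‖Q (w k)‖ + 1 / (k + 1)) atTop (nhds 0) := by
      have := hQ0'.add tendsto_one_div_add_atTop_nhds_zero_nat
      simpa using this
    exact squeeze_zero (fun k => norm_nonneg _) (fun k => (hmlt k).le) hb
  have hdwu : Tendsto (fun k => ‖w k - u k‖) atTop (nhds 0) := by
    simpa [hu_def] using hm0
  have hun : Tendsto (fun k => ‖u k‖) atTop (nhds 1) :=
    aux_tendsto_norm_congr w u 1 hdwu hw2
  -- rescale into the unit ball of Y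
  set c : ℕ → ℝ := fun k => (max 1 ‖u k‖)⁻¹ with hc_def
  have hmaxpos : ∀ k, (0 : ℝ) < max 1 ‖u k‖ := fun k =>
    lt_of_lt_of_le one_pos (le_max_left _ _)
  have hcpos : ∀ k, 0 < c k := fun k => inv_pos.mpr (hmaxpos k)
  have hc1 : Tendsto c atTop (nhds 1) := by
    have hmax : Tendsto (fun k => max 1 ‖u k‖) atTop (nhds 1) := by
      have := Tendsto.max (tendsto_const_nhds : Tendsto (fun _ : ℕ => (1:ℝ)) atTop (nhds 1)) hun
      simpa using this
    have := hmax.inv₀ (by norm_num)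
    simpa using this
  set v : ℕ → Y := fun k => c k • (⟨u k, hmem k⟩ : Y) with hv_def
  have hvcoe : ∀ k, ((v k : Y) : X) = c k • u k := fun k => rfl
  have hvnorm : ∀ k, ‖v k‖ = c k * ‖u k‖ := by
    intro k
    have : ‖v k‖ = ‖((v k : Y) : X)‖ := rfl
    rw [this, hvcoe, norm_smul, Real.norm_eq_abs, abs_of_pos (hcpos k)]
  have hvle : ∀ k, ‖v k‖ ≤ 1 := by
    intro k
    rw [hvnorm k]
    calc c k * ‖u k‖ ≤ c k * max 1 ‖u k‖ := by
          exact mul_le_mul_of_nonneg_left (le_max_right _ _) (hcpos k).le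
      _ = 1 := inv_mul_cancel₀ (hmaxpos k).ne'
  have hdvu : Tendsto (fun k => ‖(v k : X) - u k‖) atTop (nhds 0) := by
    have heq : ∀ k, ‖(v k : X) - u k‖ = |c k - 1| * ‖u k‖ := by
      intro k
      rw [hvcoe k]
      rw [show c k • u k - u k = (c k - 1) • u k by rw [sub_smul, one_smul]]
      rw [norm_smul, Real.norm_eq_abs]
    have h1 : Tendsto (fun k => |c k - 1| * ‖u k‖) atTop (nhds 0) := by
      have habs : Tendsto (fun k => |c k - 1|) atTop (nhds 0) := by
        have h := hc1.sub (tendsto_const_nhds : Tendsto (fun _ : ℕ => (1:ℝ)) atTop (nhds 1))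
        simpa using h.abs
      simpa using habs.mul hun
    simpa [heq] using h1
  have hdwv : Tendsto (fun k => ‖w k - (v k : X)‖) atTop (nhds 0) := by
    have hle : ∀ k, ‖w k - (v k : X)‖ ≤ ‖w k - u k‖ + ‖(v k : X) - u k‖ := by
      intro k
      calc ‖w k - (v k : X)‖ = ‖(w k - u k) - ((v k : X) - u k)‖ := by congr 1; abel
        _ ≤ ‖w k - u k‖ + ‖(v k : X) - u k‖ := norm_sub_le _ _
    have hb := hdwu.add hdvu
    refine squeeze_zero (fun k => norm_nonneg _) hle (by simpa using hb)
  refine ⟨v, hvle, ?_, ?_, ?_, ?_⟩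
  · -- norms tend to 1
    have := aux_tendsto_norm_congr w (fun k => ((v k : Y) : X)) 1 hdwv hw2
    simpa [show ∀ k, ‖v k‖ = ‖((v k : Y) : X)‖ from fun _ => rfl] using this
  · -- ‖y + v k‖ → 1
    have := aux_tendsto_norm_congr (fun k => (y : X) + w k)
      (fun k => (y : X) + (v k : X)) 1 (by simpa using hdwv) hwp
    simpa [show ∀ k, ‖y + v k‖ = ‖((y : X) + (v k : X))‖ from fun _ => rfl] using this
  · -- ‖y - v k‖ → 1
    have := aux_tendsto_norm_congr (fun k => (y : X) - w k)
      (fun k => (y : X) - (v k : X)) 1 (by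
        have : ∀ k, ((y : X) - w k) - ((y : X) - (v k : X)) = (v k : X) - w k := by
          intro k; abel
        simpa [this, norm_sub_rev] using hdwv) hwm
    simpa [show ∀ k, ‖y - v k‖ = ‖((y : X) - (v k : X))‖ from fun _ => rfl] using this
  · -- weak convergence to 0
    intro f
    obtain ⟨F, hF, _⟩ := exists_extension_norm_eq Y f
    have h1 : Tendsto (fun k => F ((v k : X) - w k)) atTop (nhds 0) := by
      refine squeeze_zero_norm (fun k => F.le_opNorm _) ?_
      have := hdwv.const_mul ‖F‖
      simpa [norm_sub_rev] using this
    have h2 := (hwf F).add h1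
    have heq : ∀ k, F (w k) + F ((v k : X) - w k) = F ((v k : Y) : X) := by
      intro k; rw [map_sub]; ring
    have h3 : Tendsto (fun k => F ((v k : Y) : X)) atTop (nhds 0) := by
      simpa [heq] using h2
    exact h3.congr fun k => hF (v k)
end
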